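/- arXiv:2203.00416 — 5 statements merged into one kernel-verified Lean document; each statement's English description precedes it below -/
import Mathlib

section
/- For a strict partition α = (α_1 > ⋯ > α_l > 0) with α_1 ≤ n-1, the extended Schur Q-function satisfies the Pfaffian identity: if l is even, Q̂_α(t,s) = Pf(Q̂_{(α_i,α_j)}(t,s))_{1≤i<j≤l}, and if l is odd, Q̂_α(t,s) = Pf(Q̂_{(α_i,α_j)}(t,s))_{1≤i<j≤l+1}, where α_{l+1} = 0 and Q̂_{(α_i,0)} = Q̂_{(α_i)}. -/
open Finset

noncomputable def genFn (n : ℕ) (t : ℕ → ℂ) : PowerSeries ℂ :=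
  ∑ k ∈ Finset.Icc 1 (n-1), (PowerSeries.monomial (2*k-1)) (t (2*k-1))

noncomputable def qn (n : ℕ) (t : ℕ → ℂ) (m : ℕ) : ℂ :=
  ∑ k ∈ Finset.range (m+1), PowerSeries.coeff m (genFn n t ^ k) / (Nat.factorial k : ℂ)

noncomputable def pf {R : Type*} [CommRing R] : (m : ℕ) → Matrix (Fin (2*m)) (Fin (2*m)) R → R
  | 0, _ => 1
  | (m+1), M => ∑ i : Fin (2*m+1),
      (-1 : R)^(i:ℕ) * M i.castSucc (Fin.last (2*m+1)) *
        pf m (Matrix.of fun a b => M ((i.succAbove a).castSucc) ((i.succAbove b).castSucc))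

noncomputable def Q2 (q : ℕ → ℂ) (i j : ℕ) : ℂ :=
  q i * q j + 2 * ∑ k ∈ Finset.Icc 1 j, (-1:ℂ)^k * q (i+k) * q (j-k)

noncomputable def Qsp (q : ℕ → ℂ) (α : List ℕ) : ℂ :=
  pf ((α.length + 1)/2) (Matrix.of fun i j =>
    if (i:ℕ) < (j:ℕ) then Q2 q (α.getD (i:ℕ) 0) (α.getD (j:ℕ) 0)
    else if (j:ℕ) < (i:ℕ) then - Q2 q (α.getD (j:ℕ) 0) (α.getD (i:ℕ) 0) else 0)

noncomputable def Qhat (n : ℕ) (t : ℕ → ℂ) (s : ℂ) (α : List ℕ) : ℂ :=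
  if n - 1 ∈ α then Qsp (qn n t) α + (-1:ℂ)^n * s * Qsp (qn n t) (α.erase (n-1))
  else Qsp (qn n t) α

/-! If `n - 1` is not a part of `α`, the hat changes neither `Q_α` nor any entry of the Pfaffian.
Otherwise `α = (n - 1, β)` and only the first row changes, to
`Q_{(n-1, β_j)} + (-1)^n s Q_{(β_j)}`. A Pfaffian is linear in its first row, so the right-hand
side is `Q_α + (-1)^n s Pf(M)`, where `M` has first row `Q_{(β_j, 0)}` and the entries of `Q_β`
elsewhere. Moving the first index of `M` to the end turns `Pf(M)` into the Pfaffian of `β`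
followed by zeros: one zero if `β` has odd length, which is `Q_β` by definition, and two zeros
otherwise, which can be dropped since `Q_{(0,0)} = 1` and the two last columns coincide. -/

section Pfaffian

variable {R : Type*} [CommRing R]

def succAboveNat (i a : ℕ) : ℕ := if a < i then a else a + 1

lemma succAboveNat_of_lt {i a : ℕ} (h : a < i) : succAboveNat i a = a := if_pos h

lemma succAboveNat_of_le {i a : ℕ} (h : i ≤ a) : succAboveNat i a = a + 1 :=
  if_neg (Nat.not_lt.mpr h)

lemma succAboveNat_succ_succ (i a : ℕ) : succAboveNat (i + 1) (a + 1) = succAboveNat i a + 1 := by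
  unfold succAboveNat; split_ifs <;> omega

lemma succAboveNat_comp_of_lt {i j : ℕ} (h : j < i) :
    succAboveNat i ∘ succAboveNat j = succAboveNat j ∘ succAboveNat (i - 1) := by
  funext x; simp only [Function.comp, succAboveNat]; split_ifs <;> omega

lemma Fin.val_succAbove_eq_succAboveNat {k : ℕ} (i : Fin (k + 1)) (a : Fin k) :
    (i.succAbove a : ℕ) = succAboveNat i a := by
  rcases lt_or_ge (a : ℕ) i with h | h
  · rw [Fin.succAbove_of_castSucc_lt _ _ h, succAboveNat_of_lt h, Fin.val_castSucc]
  · rw [Fin.succAbove_of_le_castSucc _ _ h, succAboveNat_of_le h, Fin.val_succ]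

noncomputable def pfaff (m : ℕ) (f : ℕ → ℕ → R) : R :=
  pf m (Matrix.of fun i j : Fin (2 * m) => f i j)

@[simp]
lemma pfaff_zero (f : ℕ → ℕ → R) : pfaff 0 f = 1 := rfl

lemma pfaff_succ (m : ℕ) (f : ℕ → ℕ → R) :
    pfaff (m + 1) f = ∑ b ∈ range (2 * m + 1),
      (-1) ^ b * f b (2 * m + 1) *
        pfaff m (fun x y => f (succAboveNat b x) (succAboveNat b y)) := by
  simp only [pfaff, pf, ← Fin.sum_univ_eq_sum_range (fun b => (-1 : R) ^ b * f b (2 * m + 1) *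
    pf m (Matrix.of fun i j : Fin (2 * m) => f (succAboveNat b i) (succAboveNat b j))),
    Matrix.of_apply, Fin.val_castSucc, Fin.val_last, Fin.val_succAbove_eq_succAboveNat]

lemma pfaff_one (f : ℕ → ℕ → R) : pfaff 1 f = f 0 1 := by
  simp [pfaff_succ]

lemma pfaff_congr {m : ℕ} {f g : ℕ → ℕ → R}
    (h : ∀ a b, a < b → b < 2 * m → f a b = g a b) :
    pfaff m f = pfaff m g := by
  induction m generalizing f g with
  | zero => rfl
  | succ m ih =>
    rw [pfaff_succ, pfaff_succ]
    refine sum_congr rfl fun b hb => ?_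
    rw [mem_range] at hb
    rw [h b (2 * m + 1) hb (by omega), ih fun x y hxy hy => h _ _ ?_ ?_] <;>
      simp only [succAboveNat] <;> split_ifs <;> omega

/- The pairs `(i, succAboveNat i j)` run over the ordered pairs of distinct indices in `[0, N]`,
`succAboveNat i ∘ succAboveNat j` enumerates the remaining indices, and exchanging the two
indices of a pair flips the sign `(-1) ^ (i + j)`. -/
lemma sum_pairs_eq_zero_of_symm (N : ℕ) (F : ℕ → ℕ → (ℕ → ℕ) → R)
    (hF : ∀ i k g, F i k g = F k i g) :
    ∑ p ∈ range (N + 1) ×ˢ range N, (-1) ^ (p.1 + p.2) *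
      F p.1 (succAboveNat p.1 p.2) (succAboveNat p.1 ∘ succAboveNat p.2) = 0 := by
  refine sum_involution (fun p _ => if p.2 < p.1 then (p.2, p.1 - 1) else (p.2 + 1, p.1))
    (fun ⟨i, j⟩ _ => ?_) (fun ⟨i, j⟩ _ _ => ?_) (fun ⟨i, j⟩ hp => ?_) (fun ⟨i, j⟩ _ => ?_)
  · dsimp only
    split_ifs with h
    · rw [succAboveNat_of_lt h, succAboveNat_of_le (by omega : j ≤ i - 1),
        ← succAboveNat_comp_of_lt h, Nat.sub_add_cancel (by omega : 1 ≤ i), hF,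
        show j + (i - 1) = i + j - 1 by omega]
      obtain ⟨k, hk⟩ : ∃ k, i + j = k + 1 := ⟨i + j - 1, by omega⟩
      rw [hk, pow_succ, Nat.add_sub_cancel]
      ring
    · rw [succAboveNat_of_le (by omega : i ≤ j), succAboveNat_of_lt (by omega : i < j + 1),
        succAboveNat_comp_of_lt (by omega : i < j + 1), Nat.add_sub_cancel, hF,
        show j + 1 + i = i + j + 1 by omega, pow_succ]
      ring
  · dsimp only; split_ifs <;> simp only [ne_eq, Prod.mk.injEq] <;> omega
  · simp only [mem_product, mem_range] at hp ⊢; split_ifs <;> omega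
  · dsimp only; split_ifs <;> simp only [Prod.mk.injEq, and_true, true_and] at * <;> omega

lemma sum_pairs_swap (N : ℕ) (F : ℕ → ℕ → (ℕ → ℕ) → R) :
    ∑ p ∈ range (N + 1) ×ˢ range N, (-1) ^ (p.1 + p.2) *
      F p.1 (succAboveNat p.1 p.2) (succAboveNat p.1 ∘ succAboveNat p.2) =
    -∑ p ∈ range (N + 1) ×ˢ range N, (-1) ^ (p.1 + p.2) *
      F (succAboveNat p.1 p.2) p.1 (succAboveNat p.1 ∘ succAboveNat p.2) := by
  rw [eq_neg_iff_add_eq_zero, ← sum_add_distrib]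
  simpa only [mul_add] using
    sum_pairs_eq_zero_of_symm N (fun i k g => F i k g + F k i g) fun i k g => add_comm _ _

lemma pfaff_succ_eq_sum_first_row (m : ℕ) (f : ℕ → ℕ → R) :
    pfaff (m + 1) f = ∑ b ∈ range (2 * m + 1), (-1) ^ b * f 0 (b + 1) *
      pfaff m (fun x y => f (succAboveNat b x + 1) (succAboveNat b y + 1)) := by
  induction m generalizing f with
  | zero => simp [pfaff_one]
  | succ m ih =>
    set G : ℕ → ℕ → (ℕ → ℕ) → R := fun i k g =>
      f (i + 1) (2 * (m + 1) + 1) * f 0 (k + 1) * pfaff m (fun x y => f (g x + 1) (g y + 1))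
    have expand_last_column : ∑ i ∈ range (2 * (m + 1)),
          (-1) ^ (i + 1) * f (i + 1) (2 * (m + 1) + 1) *
            pfaff (m + 1) (fun x y => f (succAboveNat (i + 1) x) (succAboveNat (i + 1) y)) =
        -∑ p ∈ range (2 * m + 1 + 1) ×ˢ range (2 * m + 1), (-1) ^ (p.1 + p.2) *
          G p.1 (succAboveNat p.1 p.2) (succAboveNat p.1 ∘ succAboveNat p.2) := by
      rw [sum_product, ← sum_neg_distrib]
      refine sum_congr rfl fun i _ => ?_
      rw [ih, mul_sum, ← sum_neg_distrib]
      refine sum_congr rfl fun b _ => ?_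
      simp only [G, succAboveNat_of_lt i.succ_pos, succAboveNat_succ_succ, Function.comp_apply]
      ring
    have expand_first_row : ∑ b ∈ range (2 * (m + 1)), (-1) ^ b * f 0 (b + 1) *
          pfaff (m + 1) (fun x y => f (succAboveNat b x + 1) (succAboveNat b y + 1)) =
        ∑ p ∈ range (2 * m + 1 + 1) ×ˢ range (2 * m + 1), (-1) ^ (p.1 + p.2) *
          G (succAboveNat p.1 p.2) p.1 (succAboveNat p.1 ∘ succAboveNat p.2) := by
      rw [sum_product]
      refine sum_congr rfl fun b hb => ?_
      rw [pfaff_succ, mul_sum]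
      refine sum_congr rfl fun j _ => ?_
      rw [succAboveNat_of_le (by simp only [mem_range] at hb; omega : b ≤ 2 * m + 1),
        show 2 * m + 1 + 1 + 1 = 2 * (m + 1) + 1 by ring]
      simp only [G, Function.comp_apply]
      ring
    have last_terms_eq : pfaff (m + 1) (fun x y => f (succAboveNat 0 x) (succAboveNat 0 y)) =
        pfaff (m + 1) (fun x y => f (succAboveNat (2 * (m + 1)) x + 1)
          (succAboveNat (2 * (m + 1)) y + 1)) :=
      pfaff_congr fun x y hxy hy => by
        rw [succAboveNat_of_le x.zero_le, succAboveNat_of_le y.zero_le,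
          succAboveNat_of_lt (by omega : x < 2 * (m + 1)), succAboveNat_of_lt hy]
    rw [pfaff_succ, sum_range_succ', sum_range_succ _ (2 * (m + 1)), expand_last_column,
      expand_first_row, sum_pairs_swap, neg_neg, last_terms_eq, pow_mul]
    simp

lemma sum_mul_pfaff_succAboveNat_eq_zero (M : ℕ) (g : ℕ → ℕ → R) :
    ∑ b ∈ range (2 * M), (-1) ^ b * g b (2 * M) *
      pfaff M (fun x y => g (succAboveNat b x) (succAboveNat b y)) = 0 := by
  cases M with
  | zero => simp
  | succ μ =>
    rw [← sum_pairs_eq_zero_of_symm (2 * μ + 1)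
      (fun i k φ => g i (2 * (μ + 1)) * g k (2 * (μ + 1)) *
        pfaff μ (fun x y => g (φ x) (φ y)))
      fun _ _ _ => by rw [mul_comm (g _ _)], sum_product]
    refine sum_congr rfl fun b hb => ?_
    rw [pfaff_succ, mul_sum]
    refine sum_congr rfl fun j _ => ?_
    rw [succAboveNat_of_le (by simp only [mem_range] at hb; omega : b ≤ 2 * μ + 1),
      show 2 * μ + 1 + 1 = 2 * (μ + 1) by ring]
    simp only [Function.comp_apply]
    ring

lemma pfaff_succ_of_column_eq {M : ℕ} {g : ℕ → ℕ → R}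
    (hg : ∀ a < 2 * M, g a (2 * M + 1) = g a (2 * M)) :
    pfaff (M + 1) g = g (2 * M) (2 * M + 1) * pfaff M g := by
  have repeated_column : ∑ b ∈ range (2 * M), (-1) ^ b * g b (2 * M + 1) *
      pfaff M (fun x y => g (succAboveNat b x) (succAboveNat b y)) = 0 := by
    rw [← sum_mul_pfaff_succAboveNat_eq_zero M g]
    exact sum_congr rfl fun b hb => by rw [hg b (mem_range.mp hb)]
  rw [pfaff_succ, sum_range_succ, repeated_column, zero_add, pow_mul, neg_one_sq, one_pow,
    one_mul]
  congr 1
  exact pfaff_congr fun x y _ hy => by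
    rw [succAboveNat_of_lt (by omega : x < 2 * M), succAboveNat_of_lt hy]

lemma pfaff_rotate_eq {M : ℕ} {f g : ℕ → ℕ → R}
    (h0 : ∀ b < 2 * M + 1, f 0 (b + 1) = g b (2 * M + 1))
    (hf : ∀ a b, a < b → b < 2 * M + 1 → f (a + 1) (b + 1) = g a b) :
    pfaff (M + 1) f = pfaff (M + 1) g := by
  rw [pfaff_succ_eq_sum_first_row, pfaff_succ]
  refine sum_congr rfl fun b hb => ?_
  rw [h0 b (mem_range.mp hb)]
  congr 1
  refine pfaff_congr fun x y hxy hy => hf _ _ ?_ ?_ <;>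
    simp only [mem_range, succAboveNat] at hb ⊢ <;> split_ifs <;> omega

lemma pfaff_add_first_row {m : ℕ} {f g h : ℕ → ℕ → R} (K : R)
    (h0 : ∀ b < 2 * m + 1, f 0 (b + 1) = g 0 (b + 1) + K * h 0 (b + 1))
    (hg : ∀ a b, 0 < a → a < b → f a b = g a b)
    (hh : ∀ a b, 0 < a → a < b → f a b = h a b) :
    pfaff (m + 1) f = pfaff (m + 1) g + K * pfaff (m + 1) h := by
  simp only [pfaff_succ_eq_sum_first_row, mul_sum, ← sum_add_distrib]
  refine sum_congr rfl fun b hb => ?_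
  have minor_eq (k : ℕ → ℕ → R) (hk : ∀ a c, 0 < a → a < c → f a c = k a c) :
      pfaff m (fun x y => f (succAboveNat b x + 1) (succAboveNat b y + 1)) =
        pfaff m (fun x y => k (succAboveNat b x + 1) (succAboveNat b y + 1)) :=
    pfaff_congr fun x y hxy _ =>
      hk _ _ (by omega) (by simp only [succAboveNat]; split_ifs <;> omega)
  rw [← minor_eq g hg, ← minor_eq h hh, h0 b (mem_range.mp hb)]
  ring

lemma pfaff_eq_of_first_row_pad {ι : Type*} (F : ι → ι → R) (z : ι) (hF : F z z = 1)
    (y : ℕ → ι) (L : ℕ) (hy : ∀ c, L ≤ c → y c = z) {f : ℕ → ℕ → R}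
    (h0 : ∀ b, f 0 (b + 1) = F (y b) z)
    (hf : ∀ a b, a < b → f (a + 1) (b + 1) = F (y a) (y b)) :
    pfaff (L / 2 + 1) f = pfaff ((L + 1) / 2) (fun a b => F (y a) (y b)) := by
  obtain ⟨M, rfl | rfl⟩ : ∃ M, L = 2 * M ∨ L = 2 * M + 1 := ⟨L / 2, by omega⟩
  · have rotate : pfaff (M + 1) f = pfaff (M + 1) (fun a b => F (y a) (y b)) :=
      pfaff_rotate_eq (fun b _ => by rw [h0, hy (2 * M + 1) (by omega)])
        fun a b hab _ => hf a b hab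
    rw [show 2 * M / 2 + 1 = M + 1 by omega, show (2 * M + 1) / 2 = M by omega, rotate,
      pfaff_succ_of_column_eq fun a _ => by rw [hy (2 * M) le_rfl, hy (2 * M + 1) (by omega)],
      hy (2 * M) le_rfl, hy (2 * M + 1) (by omega), hF, one_mul]
  · rw [show (2 * M + 1) / 2 + 1 = M + 1 by omega, show (2 * M + 1 + 1) / 2 = M + 1 by omega]
    exact pfaff_rotate_eq (fun b _ => by rw [h0, hy (2 * M + 1) le_rfl])
      fun a b hab _ => hf a b hab

lemma pf_antisymm_eq_pfaff (m : ℕ) (g : ℕ → ℕ → R) :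
    pf m (Matrix.of fun i j : Fin (2 * m) =>
      if (i : ℕ) < j then g i j else if (j : ℕ) < i then -g j i else 0) = pfaff m g :=
  pfaff_congr (f := fun a b => if a < b then g a b else if b < a then -g b a else 0)
    fun _ _ hab _ => if_pos hab

end Pfaffian

lemma List.getD_ne_of_not_mem {α : Type*} {l : List α} {x d : α} (hx : x ∉ l) (hd : d ≠ x)
    (c : ℕ) : l.getD c d ≠ x := by
  rcases lt_or_ge c l.length with h | h
  · rw [List.getD_eq_getElem _ _ h]
    exact ne_of_mem_of_not_mem (List.getElem_mem h) hx
  · rwa [List.getD_eq_default _ _ h]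

lemma List.eq_cons_of_mem_of_pairwise_gt {l : List ℕ} {N : ℕ} (hl : l.Pairwise (· > ·))
    (hle : ∀ a ∈ l, a ≤ N) (hN : N ∈ l) : ∃ l', l = N :: l' ∧ N ∉ l' := by
  obtain _ | ⟨a, l'⟩ := l
  · exact absurd hN List.not_mem_nil
  obtain ⟨ha, -⟩ := List.pairwise_cons.mp hl
  obtain rfl : a = N := by
    rcases List.mem_cons.mp hN with h | h
    · exact h.symm
    · exact absurd (hle a List.mem_cons_self) (Nat.not_le.mpr (ha N h))
  exact ⟨l', rfl, fun h => lt_irrefl a (ha a h)⟩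

lemma qn_zero (n : ℕ) (t : ℕ → ℂ) : qn n t 0 = 1 := by
  simp [qn]

lemma Qsp_eq_pfaff (q : ℕ → ℂ) (β : List ℕ) :
    Qsp q β = pfaff ((β.length + 1) / 2) (fun a b => Q2 q (β.getD a 0) (β.getD b 0)) :=
  pf_antisymm_eq_pfaff _ (fun a b => Q2 q (β.getD a 0) (β.getD b 0))

lemma Qsp_pair (q : ℕ → ℂ) (u w : ℕ) : Qsp q [u, w] = Q2 q u w := by
  simp [Qsp_eq_pfaff, pfaff_one]

lemma Qsp_singleton (q : ℕ → ℂ) (u : ℕ) : Qsp q [u] = Q2 q u 0 := by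
  simp [Qsp_eq_pfaff, pfaff_one]

section Qhat

variable (n : ℕ) (t : ℕ → ℂ) (s : ℂ)

lemma Qhat_pair_of_ne {u w : ℕ} (hu : u ≠ n - 1) (hw : w ≠ n - 1) :
    Qhat n t s [u, w] = Q2 (qn n t) u w := by
  rw [Qhat, if_neg (by simp [hu.symm, hw.symm]), Qsp_pair]

lemma Qhat_pair_head (w : ℕ) :
    Qhat n t s [n - 1, w] = Q2 (qn n t) (n - 1) w + (-1) ^ n * s * Q2 (qn n t) w 0 := by
  rw [Qhat, if_pos List.mem_cons_self, List.erase_cons_head, Qsp_pair, Qsp_singleton]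

lemma Qhat_eq_pfaff_of_getD_ne {α : List ℕ} (hne : ∀ c, α.getD c 0 ≠ n - 1) :
    Qhat n t s α =
      pfaff ((α.length + 1) / 2) (fun a b => Qhat n t s [α.getD a 0, α.getD b 0]) := by
  have hα : n - 1 ∉ α := fun h => by
    obtain ⟨c, hc, hcα⟩ := List.getElem_of_mem h
    exact hne c (by rw [List.getD_eq_getElem _ _ hc, hcα])
  rw [Qhat, if_neg hα, Qsp_eq_pfaff]
  simp only [Qhat_pair_of_ne n t s (hne _) (hne _)]

lemma Qhat_cons_eq_pfaff {β : List ℕ} (hne : ∀ c, β.getD c 0 ≠ n - 1) :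
    Qhat n t s ((n - 1) :: β) = pfaff ((β.length + 1 + 1) / 2)
      (fun a b => Qhat n t s [((n - 1) :: β).getD a 0, ((n - 1) :: β).getD b 0]) := by
  set x : ℕ → ℕ := fun a => ((n - 1) :: β).getD a 0
  have hx_succ (a : ℕ) : x (a + 1) = β.getD a 0 := List.getD_cons_succ
  have hx_ne (a : ℕ) (ha : 0 < a) : x a ≠ n - 1 := by
    obtain ⟨a, rfl⟩ := Nat.exists_eq_add_of_lt ha
    rw [zero_add, hx_succ]
    exact hne a
  have split_first_row := pfaff_add_first_row (m := β.length / 2) ((-1) ^ n * s)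
    (g := fun a b => Q2 (qn n t) (x a) (x b))
    (h := fun a b => if a = 0 then Q2 (qn n t) (x b) 0 else Q2 (qn n t) (x a) (x b))
    (fun b _ => Qhat_pair_head n t s _)
    (fun a b ha hab => Qhat_pair_of_ne n t s (hx_ne a ha) (hx_ne b (by omega)))
    (fun a b ha hab => by
      rw [if_neg ha.ne', Qhat_pair_of_ne n t s (hx_ne a ha) (hx_ne b (by omega))])
  have pad := pfaff_eq_of_first_row_pad (Q2 (qn n t)) 0 (by simp [Q2, qn_zero])
    (fun c => β.getD c 0) β.length (fun c hc => List.getD_eq_default _ _ hc)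
    (f := fun a b => if a = 0 then Q2 (qn n t) (x b) 0 else Q2 (qn n t) (x a) (x b))
    (fun b => by simp only [↓reduceIte, hx_succ])
    (fun a b _ => by simp only [Nat.add_one_ne_zero, ↓reduceIte, hx_succ])
  rw [Qhat, if_pos List.mem_cons_self, List.erase_cons_head, Qsp_eq_pfaff, Qsp_eq_pfaff,
    List.length_cons, show (β.length + 1 + 1) / 2 = β.length / 2 + 1 by omega, split_first_row,
    pad]

end Qhat

theorem stmt1_general (n : ℕ) (hn : 2 ≤ n) (t : ℕ → ℂ) (s : ℂ) (α : List ℕ)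
    (hsd : List.Pairwise (· > ·) α) (hbd : ∀ a ∈ α, a ≤ n - 1) :
    Qhat n t s α = pf ((α.length + 1)/2) (Matrix.of fun i j =>
      if (i:ℕ) < (j:ℕ) then Qhat n t s [α.getD (i:ℕ) 0, α.getD (j:ℕ) 0]
      else if (j:ℕ) < (i:ℕ) then - Qhat n t s [α.getD (j:ℕ) 0, α.getD (i:ℕ) 0]
      else 0) := by
  have h0 : 0 ≠ n - 1 := by omega
  refine Eq.trans ?_
    (pf_antisymm_eq_pfaff _ (fun a b => Qhat n t s [α.getD a 0, α.getD b 0])).symm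
  by_cases hmem : n - 1 ∈ α
  · obtain ⟨β, rfl, hβ⟩ := List.eq_cons_of_mem_of_pairwise_gt hsd hbd hmem
    exact Qhat_cons_eq_pfaff n t s (List.getD_ne_of_not_mem hβ h0)
  · exact Qhat_eq_pfaff_of_getD_ne n t s (List.getD_ne_of_not_mem hmem h0)

theorem stmt1 (n : ℕ) (hn : 2 ≤ n) (t : ℕ → ℂ) (s : ℂ) (α : List ℕ)
    (hsd : List.Pairwise (· > ·) α) (hpos : ∀ a ∈ α, 0 < a) (hbd : ∀ a ∈ α, a ≤ n - 1) :
    Qhat n t s α = pf ((α.length + 1)/2) (Matrix.of fun i j =>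
      if (i:ℕ) < (j:ℕ) then Qhat n t s [α.getD (i:ℕ) 0, α.getD (j:ℕ) 0]
      else if (j:ℕ) < (i:ℕ) then - Qhat n t s [α.getD (j:ℕ) 0, α.getD (i:ℕ) 0]
      else 0) :=
  stmt1_general n hn t s α hsd hbd
end

section
/- With Λ, Λ', Λ'' as above and q_m(t) defined by ∑_{m≥0} q_m(t) z^m = exp(∑_{k=1}^{n-1} t_{2k-1} z^{2k-1}), the matrix exponential satisfies exp(∑_{k=1}^{n-1} t_{2k-1} Λ^{2k-1} + s Λ') = ∑_{m=0}^{2n-2} q_m(t) Λ^m + s Λ' - (-1)^n s² Λ''. -/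
open Finset

noncomputable def Lam (n : ℕ) : Matrix (Fin (2*n)) (Fin (2*n)) ℂ :=
  Matrix.of fun i j =>
    (if (j:ℕ)+1 = (i:ℕ)+2 ∧ (i:ℕ)+1 ≠ n then (1:ℂ) else 0)
    + (if (i:ℕ)+1 = n-1 ∧ (j:ℕ)+1 = n+1 then 1 else 0)
    + (if (i:ℕ)+1 = n ∧ (j:ℕ)+1 = n+2 then 1 else 0)

noncomputable def Lam' (n : ℕ) : Matrix (Fin (2*n)) (Fin (2*n)) ℂ :=
  Matrix.of fun i j =>
    (if (i:ℕ)+1 = 1 ∧ (j:ℕ)+1 = n then (-1:ℂ) else 0)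
    + (if (i:ℕ)+1 = 1 ∧ (j:ℕ)+1 = n+1 then 1 else 0)
    + (if (i:ℕ)+1 = n ∧ (j:ℕ)+1 = 2*n then (-1:ℂ)^n else 0)
    + (if (i:ℕ)+1 = n+1 ∧ (j:ℕ)+1 = 2*n then -(-1:ℂ)^n else 0)

noncomputable def Lam'' (n : ℕ) : Matrix (Fin (2*n)) (Fin (2*n)) ℂ :=
  Matrix.of fun i j => if (i:ℕ)+1 = 1 ∧ (j:ℕ)+1 = 2*n then (1:ℂ) else 0

/-
All exponentials involved are of nilpotent matrices, so `NormedSpace.exp` is the finite sum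
`IsNilpotent.exp` and the argument is purely algebraic. Write `A = ∑ t_{2k-1} Λ^{2k-1} = p(Λ)`
for the odd polynomial `p` and `B = sΛ'`. The matrix `Λ` raises the grading `i ↦ i` (`i ≤ n`),
`i ↦ i - 1` (`i > n`) by one, so `Λ^{2n-1} = 0`, and `exp A` is the truncation at `Λ` of the
power series `exp (p z) = ∑ q_m z^m`. Next, `Λ' = e₁ wᵀ - (-1)ⁿ w e_{2n}ᵀ` with
`w = e_{n+1} - e_n`, and `Λ e₁ = Λ w = 0`, `wᵀ Λ = e_{2n}ᵀ Λ = 0`, so `AB = BA = 0`; this gives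
`exp (A + B) = exp A + exp B - 1`. Finally `B² = -2(-1)ⁿ s² Λ''` and `B³ = 0`.
-/

open Matrix Polynomial

theorem NormedSpace.exp_eq_isNilpotent_exp {A : Type*} [Ring A] [Algebra ℚ A]
    [TopologicalSpace A] [IsTopologicalRing A] {a : A} (ha : IsNilpotent a) :
    NormedSpace.exp a = IsNilpotent.exp a := by
  obtain ⟨K, hK⟩ := ha
  rw [NormedSpace.exp_eq_tsum_rat, IsNilpotent.exp_eq_sum hK]
  exact tsum_eq_sum fun j hj ↦ by rw [pow_eq_zero_of_le (by simpa using hj) hK, smul_zero]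

namespace IsNilpotent

variable {A : Type*} [Ring A] [Module ℚ A] {a b : A}

theorem exp_mul_of_mul_eq_zero (ha : IsNilpotent a) (hab : a * b = 0) : exp a * b = b := by
  obtain ⟨K, hK⟩ := ha
  rw [exp_eq_sum (pow_eq_zero_of_le K.le_succ hK), sum_mul, sum_range_succ',
    sum_eq_zero fun i _ ↦ by
      rw [smul_mul_assoc, _root_.pow_succ, mul_assoc, hab, mul_zero, smul_zero]]
  simp

theorem mul_exp_of_mul_eq_zero (ha : IsNilpotent a) (hba : b * a = 0) : b * exp a = b := by
  obtain ⟨K, hK⟩ := ha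
  rw [exp_eq_sum (pow_eq_zero_of_le K.le_succ hK), mul_sum, sum_range_succ',
    sum_eq_zero fun i _ ↦ by
      rw [mul_smul_comm, _root_.pow_succ', ← mul_assoc, hba, zero_mul, smul_zero]]
  simp

theorem exp_add_of_mul_eq_zero (ha : IsNilpotent a) (hb : IsNilpotent b) (hab : a * b = 0)
    (hba : b * a = 0) : exp (a + b) = exp a + exp b - 1 := by
  have hcomm : Commute a b := hab.trans hba.symm
  have h : (exp a - 1) * exp b = exp a - 1 :=
    hb.mul_exp_of_mul_eq_zero (by rw [sub_mul, exp_mul_of_mul_eq_zero ha hab, one_mul, sub_self])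
  rw [exp_add_of_commute hcomm ha hb]
  calc exp a * exp b = (exp a - 1) * exp b + exp b := by noncomm_ring
    _ = exp a + exp b - 1 := by rw [h]; abel

end IsNilpotent

namespace Polynomial

variable {R A : Type*} [CommSemiring R] [Semiring A] [Algebra R A]

theorem aeval_eq_sum_range_of_pow_eq_zero {x : A} {K : ℕ} (hx : x ^ K = 0) (p : R[X]) :
    aeval x p = ∑ m ∈ range K, p.coeff m • x ^ m := by
  rw [aeval_eq_sum_range' (Nat.lt_succ_of_le (le_max_right K p.natDegree))]
  refine (sum_subset (range_subset_range.2 ((le_max_left _ _).trans (Nat.le_succ _))) ?_).symm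
  intro m _ hm
  rw [pow_eq_zero_of_le (by simpa using hm) hx, smul_zero]

theorem aeval_pow_eq_zero_of_X_dvd {x : A} {K : ℕ} (hx : x ^ K = 0) {p : R[X]} (hp : X ∣ p) :
    aeval x p ^ K = 0 := by
  obtain ⟨q, hq⟩ := pow_dvd_pow_of_dvd hp K
  rw [← map_pow, hq, map_mul, map_pow, aeval_X, hx, zero_mul]

theorem aeval_mul_eq_zero_of_X_dvd {x b : A} (hxb : x * b = 0) {p : R[X]} (hp : X ∣ p) :
    aeval x p * b = 0 := by
  obtain ⟨q, rfl⟩ := hp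
  rw [mul_comm, map_mul, aeval_X, mul_assoc, hxb, mul_zero]

theorem mul_aeval_eq_zero_of_X_dvd {x b : A} (hbx : b * x = 0) {p : R[X]} (hp : X ∣ p) :
    b * aeval x p = 0 := by
  obtain ⟨q, rfl⟩ := hp
  rw [map_mul, aeval_X, ← mul_assoc, hbx, zero_mul]

end Polynomial

theorem IsNilpotent.exp_aeval_eq_sum {𝕜 A : Type*} [Field 𝕜] [CharZero 𝕜] [Ring A]
    [Algebra 𝕜 A] [Module ℚ A] {x : A} {K : ℕ} (hx : x ^ K = 0) {p : 𝕜[X]}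
    (hp : X ∣ p) :
    IsNilpotent.exp (aeval x p) =
      ∑ m ∈ range K, (∑ j ∈ range (m + 1), (p ^ j).coeff m / j.factorial) • x ^ m := by
  have hlow : ∀ j m, m < j → (p ^ j).coeff m = 0 := fun j ↦
    X_pow_dvd_iff.1 (pow_dvd_pow_of_dvd hp j)
  calc IsNilpotent.exp (aeval x p)
      = ∑ j ∈ range K, ∑ m ∈ range K, ((p ^ j).coeff m / j.factorial) • x ^ m := by
        rw [IsNilpotent.exp_eq_sum (aeval_pow_eq_zero_of_X_dvd hx hp)]
        refine sum_congr rfl fun j _ ↦ ?_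
        rw [← inv_natCast_smul_eq 𝕜 ℚ, ← map_pow, aeval_eq_sum_range_of_pow_eq_zero hx,
          smul_sum]
        simp only [smul_smul, div_eq_inv_mul]
    _ = ∑ m ∈ range K, (∑ j ∈ range K, (p ^ j).coeff m / j.factorial) • x ^ m := by
        rw [sum_comm]
        simp only [sum_smul]
    _ = _ := by
        refine sum_congr rfl fun m hm ↦ congrArg (· • x ^ m) ?_
        refine (sum_subset (range_subset_range.2 (mem_range.1 hm)) fun j _ hj ↦ ?_).symm
        rw [hlow j m (by simpa using hj), zero_div]

namespace Matrix

variable {ι R : Type*} [Fintype ι] [DecidableEq ι] [Semiring R] {M : Matrix ι ι R}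

theorem eq_add_of_pow_apply_ne_zero (d : ι → ℕ) (hM : ∀ i j, M i j ≠ 0 → d j = d i + 1)
    (m : ℕ) {i j : ι} (h : (M ^ m) i j ≠ 0) : d j = d i + m := by
  induction m generalizing j with
  | zero =>
    rw [pow_zero, one_apply] at h
    obtain rfl : i = j := by by_contra hij; exact h (if_neg hij)
    rfl
  | succ m ih =>
    rw [pow_succ, mul_apply] at h
    obtain ⟨k, -, hk⟩ := exists_ne_zero_of_sum_ne_zero h
    rw [hM k j (right_ne_zero_of_mul hk), ih (left_ne_zero_of_mul hk), add_assoc]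

theorem pow_eq_zero_of_degree_lt (d : ι → ℕ) (hM : ∀ i j, M i j ≠ 0 → d j = d i + 1)
    {m : ℕ} (hd : ∀ i, d i < m) : M ^ m = 0 := by
  ext i j
  by_contra h
  have := eq_add_of_pow_apply_ne_zero d hM m h
  have := hd j
  omega

end Matrix

def lamDegree (n : ℕ) (i : Fin (2 * n)) : ℕ := if (i : ℕ) < n then i else i - 1

theorem lamDegree_eq_of_lam_apply_ne_zero {n : ℕ} {i j : Fin (2 * n)} (h : Lam n i j ≠ 0) :
    lamDegree n j = lamDegree n i + 1 := by
  simp only [Lam, of_apply] at h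
  unfold lamDegree
  split_ifs at h ⊢ <;> first | omega | (exfalso; exact h (by norm_num))

theorem lam_pow_eq_zero (n : ℕ) : Lam n ^ (2 * n - 1) = 0 :=
  pow_eq_zero_of_degree_lt (lamDegree n) (fun _ _ ↦ lamDegree_eq_of_lam_apply_ne_zero)
    fun i ↦ by unfold lamDegree; split_ifs <;> omega

section

variable (n : ℕ) [NeZero n]

def basisFirst : Fin (2 * n) → ℂ := Pi.single ⟨0, by have := NeZero.pos n; omega⟩ 1

def basisLast : Fin (2 * n) → ℂ := Pi.single ⟨2 * n - 1, by have := NeZero.pos n; omega⟩ 1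

def lamNullVec : Fin (2 * n) → ℂ :=
  Pi.single ⟨n, by have := NeZero.pos n; omega⟩ 1 -
    Pi.single ⟨n - 1, by have := NeZero.pos n; omega⟩ 1

theorem lam'_eq : Lam' n = vecMulVec (basisFirst n) (lamNullVec n)
    - (-1 : ℂ) ^ n • vecMulVec (lamNullVec n) (basisLast n) := by
  have := NeZero.pos n
  ext i j
  simp only [Lam', basisFirst, basisLast, lamNullVec, of_apply, Matrix.sub_apply,
    Matrix.smul_apply, vecMulVec_apply, Pi.sub_apply, Pi.single_apply, Fin.ext_iff, smul_eq_mul]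
  split_ifs <;> first | omega | ring

theorem lam''_eq : Lam'' n = vecMulVec (basisFirst n) (basisLast n) := by
  ext i j
  simp only [Lam'', basisFirst, basisLast, of_apply, vecMulVec_apply, Pi.single_apply, Fin.ext_iff]
  split_ifs <;> first | omega | ring

theorem lam_mulVec_basisFirst : Lam n *ᵥ basisFirst n = 0 := by
  ext i
  simp only [basisFirst, mulVec_single_one, col_apply, Lam, of_apply, Pi.zero_apply]
  split_ifs <;> first | omega | ring

theorem lam_mulVec_lamNullVec : Lam n *ᵥ lamNullVec n = 0 := by
  have := NeZero.pos n
  ext i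
  simp only [lamNullVec, mulVec_sub, mulVec_single_one, Pi.sub_apply, col_apply, Lam, of_apply,
    Pi.zero_apply, and_true]
  split_ifs <;> first | omega | ring

theorem lamNullVec_vecMul_lam : lamNullVec n ᵥ* Lam n = 0 := by
  have := NeZero.pos n
  ext i
  simp only [lamNullVec, sub_vecMul, single_one_vecMul, Pi.sub_apply, row_apply, Lam, of_apply,
    Pi.zero_apply]
  split_ifs <;> first | omega | ring

theorem basisLast_vecMul_lam : basisLast n ᵥ* Lam n = 0 := by
  have := NeZero.pos n
  ext i
  simp only [basisLast, single_one_vecMul, row_apply, Lam, of_apply, Pi.zero_apply]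
  split_ifs <;> first | omega | ring

variable {n}

theorem lamNullVec_dotProduct_basisFirst (hn : 2 ≤ n) : lamNullVec n ⬝ᵥ basisFirst n = 0 := by
  simp only [lamNullVec, basisFirst, dotProduct_single_one, Pi.sub_apply, Pi.single_apply,
    Fin.ext_iff]
  split_ifs <;> first | omega | ring

theorem lamNullVec_dotProduct_self : lamNullVec n ⬝ᵥ lamNullVec n = 2 := by
  have := NeZero.pos n
  simp only [lamNullVec, dotProduct_sub, dotProduct_single_one, Pi.sub_apply, Pi.single_apply,
    Fin.ext_iff]
  split_ifs <;> first | omega | ring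

theorem basisLast_dotProduct_basisFirst : basisLast n ⬝ᵥ basisFirst n = 0 := by
  have := NeZero.pos n
  simp only [basisLast, basisFirst, dotProduct_single_one, Pi.single_apply, Fin.ext_iff]
  split_ifs <;> first | omega | ring

theorem basisLast_dotProduct_lamNullVec (hn : 2 ≤ n) : basisLast n ⬝ᵥ lamNullVec n = 0 := by
  simp only [lamNullVec, basisLast, dotProduct_sub, dotProduct_single_one, Pi.single_apply,
    Fin.ext_iff]
  split_ifs <;> first | omega | ring

theorem lam_mul_lam' : Lam n * Lam' n = 0 := by
  rw [lam'_eq, mul_sub, mul_smul_comm, mul_vecMulVec, mul_vecMulVec, lam_mulVec_basisFirst,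
    lam_mulVec_lamNullVec, zero_vecMulVec, zero_vecMulVec, smul_zero, sub_zero]

theorem lam'_mul_lam : Lam' n * Lam n = 0 := by
  rw [lam'_eq, sub_mul, smul_mul_assoc, vecMulVec_mul, vecMulVec_mul, lamNullVec_vecMul_lam,
    basisLast_vecMul_lam, vecMulVec_zero, vecMulVec_zero, smul_zero, sub_zero]

end

theorem lam'_mul_lam' {n : ℕ} (hn : 2 ≤ n) :
    Lam' n * Lam' n = (-2 * (-1) ^ n : ℂ) • Lam'' n := by
  have : NeZero n := ⟨by omega⟩
  rw [lam'_eq, lam''_eq]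
  simp only [sub_mul, mul_sub, smul_mul_assoc, mul_smul_comm, vecMulVec_mul_vecMulVec,
    lamNullVec_dotProduct_basisFirst hn, lamNullVec_dotProduct_self,
    basisLast_dotProduct_basisFirst, basisLast_dotProduct_lamNullVec hn, zero_smul,
    vecMulVec_zero, smul_zero, vecMulVec_smul]
  module

theorem lam''_mul_lam' {n : ℕ} (hn : 2 ≤ n) : Lam'' n * Lam' n = 0 := by
  have : NeZero n := ⟨by omega⟩
  rw [lam'_eq, lam''_eq, mul_sub, mul_smul_comm, vecMulVec_mul_vecMulVec,
    vecMulVec_mul_vecMulVec, basisLast_dotProduct_basisFirst, basisLast_dotProduct_lamNullVec hn,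
    zero_smul, zero_smul, vecMulVec_zero, smul_zero, sub_zero]

section

variable {n : ℕ} (s : ℂ)

theorem smul_lam'_sq (hn : 2 ≤ n) : (s • Lam' n) ^ 2 = (-2 * (-1) ^ n * s ^ 2) • Lam'' n := by
  rw [sq, smul_mul_smul_comm, lam'_mul_lam' hn, smul_smul]
  ring_nf

theorem smul_lam'_pow_three (hn : 2 ≤ n) : (s • Lam' n) ^ 3 = 0 := by
  rw [pow_succ, smul_lam'_sq s hn, smul_mul_smul_comm, lam''_mul_lam' hn, smul_zero]

theorem exp_smul_lam' (hn : 2 ≤ n) :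
    IsNilpotent.exp (s • Lam' n) = 1 + s • Lam' n - ((-1) ^ n * s ^ 2) • Lam'' n := by
  rw [IsNilpotent.exp_eq_sum (smul_lam'_pow_three s hn)]
  simp only [sum_range_succ, sum_range_zero, smul_lam'_sq s hn, zero_add, pow_zero, pow_one,
    Nat.factorial_zero, Nat.factorial_one, Nat.factorial_two, Nat.cast_one, inv_one, one_smul]
  rw [← inv_natCast_smul_eq ℂ ℚ, smul_smul, sub_eq_add_neg, ← neg_smul]
  congr 2
  push_cast
  ring

end

noncomputable def oddPoly (n : ℕ) (t : ℕ → ℂ) : ℂ[X] :=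
  ∑ k ∈ Icc 1 (n - 1), monomial (2 * k - 1) (t (2 * k - 1))

theorem X_dvd_oddPoly (n : ℕ) (t : ℕ → ℂ) : X ∣ oddPoly n t := by
  rw [X_dvd_iff, oddPoly, finsetSum_coeff]
  exact sum_eq_zero fun k hk ↦ coeff_monomial_of_ne _ (by simp at hk; omega)

theorem aeval_oddPoly {A : Type*} [Ring A] [Algebra ℂ A] (x : A) (n : ℕ) (t : ℕ → ℂ) :
    aeval x (oddPoly n t) = ∑ k ∈ Icc 1 (n - 1), t (2 * k - 1) • x ^ (2 * k - 1) := by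
  simp [oddPoly, aeval_monomial, Algebra.smul_def]

theorem genFn_eq_coe_oddPoly (n : ℕ) (t : ℕ → ℂ) :
    genFn n t = (oddPoly n t : PowerSeries ℂ) := by
  rw [genFn, oddPoly, ← coeToPowerSeries.ringHom_apply, map_sum]
  simp [coe_monomial]

theorem qn_eq (n : ℕ) (t : ℕ → ℂ) (m : ℕ) :
    qn n t m = ∑ j ∈ range (m + 1), (oddPoly n t ^ j).coeff m / j.factorial := by
  simp [qn, genFn_eq_coe_oddPoly, ← Polynomial.coe_pow, coeff_coe]

theorem stmt6 (n : ℕ) (hn : 2 ≤ n) (t : ℕ → ℂ) (s : ℂ) :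
    NormedSpace.exp (∑ k ∈ Finset.Icc 1 (n-1), t (2*k-1) • Lam n ^ (2*k-1) + s • Lam' n)
      = ∑ m ∈ Finset.range (2*n-1), qn n t m • Lam n ^ m + s • Lam' n
        - ((-1:ℂ)^n * s^2) • Lam'' n := by
  have : NeZero n := ⟨by omega⟩
  have hX := X_dvd_oddPoly n t
  have hA : IsNilpotent (aeval (Lam n) (oddPoly n t)) :=
    ⟨_, aeval_pow_eq_zero_of_X_dvd (lam_pow_eq_zero n) hX⟩
  have hB : IsNilpotent (s • Lam' n) := ⟨3, smul_lam'_pow_three s hn⟩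
  have hAB : aeval (Lam n) (oddPoly n t) * (s • Lam' n) = 0 :=
    aeval_mul_eq_zero_of_X_dvd (by rw [mul_smul_comm, lam_mul_lam', smul_zero]) hX
  have hBA : (s • Lam' n) * aeval (Lam n) (oddPoly n t) = 0 :=
    mul_aeval_eq_zero_of_X_dvd (by rw [smul_mul_assoc, lam'_mul_lam, smul_zero]) hX
  rw [← aeval_oddPoly, NormedSpace.exp_eq_isNilpotent_exp
      (Commute.isNilpotent_add (hAB.trans hBA.symm) hA hB),
    IsNilpotent.exp_add_of_mul_eq_zero hA hB hAB hBA,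
    IsNilpotent.exp_aeval_eq_sum (lam_pow_eq_zero n) hX, exp_smul_lam' s hn]
  simp_rw [qn_eq]
  abel
end

section
/- With notation as above, let p = #{k : j_k ≥ n+2}. Then j_{n-p} ∈ {n, n+1}; moreover j_{n-p} = n if and only if p is even, and j_{n-p} = n+1 if and only if p is odd. Also λ_{p+1} = p. -/
open Finset

def Wcond (n : ℕ) (w : Equiv.Perm (Fin (2*n))) : Prop :=
  ∀ i : Fin (2*n), ((w i : ℕ) + 1) + ((w i.rev : ℕ) + 1) = 2*n + 1

def Wpar (n : ℕ) (w : Equiv.Perm (Fin (2*n))) : Prop :=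
  Even ((Finset.univ.filter (fun i : Fin (2*n) => (i : ℕ) < n ∧ n ≤ (w i : ℕ))).card)

noncomputable def jjf (n : ℕ) (w : Equiv.Perm (Fin (2*n))) (k : ℕ) : ℕ :=
  ((((Finset.univ.filter (fun i : Fin (2*n) => (i : ℕ) < n)).image w).sort (· ≤ ·)).map
    (fun x => (x : ℕ) + 1)).getD (k-1) 0

noncomputable def lamf (n : ℕ) (w : Equiv.Perm (Fin (2*n))) (k : ℕ) : ℤ :=
  if jjf n w (n+1-k) ≤ n then (jjf n w (n+1-k) : ℤ) - ((n+1-k : ℕ) : ℤ)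
  else (jjf n w (n+1-k) : ℤ) - ((n+1-k : ℕ) : ℤ) - 1

noncomputable def pval (n : ℕ) (w : Equiv.Perm (Fin (2*n))) : ℕ :=
  ((Finset.Icc 1 n).filter (fun k => n+2 ≤ jjf n w k)).card

/-!
Write `S = {w(1), …, w(n)}`. The symmetry `w(2n+1-i) = 2n+1-w(i)` makes `S` meet every pair
`{v, 2n+1-v}` exactly once. In particular exactly one of `n, n+1` lies in `S`, and every other
element of `S` is `≤ n-1` or `≥ n+2`, so `p` counts the elements of `S` above this middle
element, which is therefore `j_{n-p}`. The parity condition says that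
`#{v ∈ S | v ≥ n+1} = p + [n+1 ∈ S]` is even, so `j_{n-p} = n+1` exactly when `p` is odd, and
`λ_{p+1} = j_{n-p} - (n-p) - [j_{n-p} = n+1] = p`.
-/

namespace Finset

variable {α : Type*} [LinearOrder α] {s : Finset α} {k : ℕ}

theorem filter_orderEmbOfFin_lt (h : #s = k) (i : Fin k) :
    {y ∈ s | s.orderEmbOfFin h i < y} = (Ioi i).image (s.orderEmbOfFin h) := by
  ext y
  rw [mem_filter, mem_image]
  constructor
  · rintro ⟨hy, hlt⟩
    obtain ⟨j, rfl⟩ : y ∈ Set.range (s.orderEmbOfFin h) := by simpa using hy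
    exact ⟨j, mem_Ioi.2 ((s.orderEmbOfFin h).lt_iff_lt.1 hlt), rfl⟩
  · rintro ⟨j, hj, rfl⟩
    exact ⟨orderEmbOfFin_mem s h j, (s.orderEmbOfFin h).lt_iff_lt.2 (mem_Ioi.1 hj)⟩

theorem card_filter_orderEmbOfFin_lt (h : #s = k) (i : Fin k) :
    #{y ∈ s | s.orderEmbOfFin h i < y} = k - 1 - i := by
  rw [filter_orderEmbOfFin_lt, card_image_of_injective _ (s.orderEmbOfFin h).injective,
    Fin.card_Ioi]

theorem card_filter_orderEmbOfFin (h : #s = k) (p : α → Prop) [DecidablePred p] :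
    #{i | p (s.orderEmbOfFin h i)} = #{x ∈ s | p x} := by
  conv_rhs => rw [← image_orderEmbOfFin_univ s h, filter_image,
    card_image_of_injective _ (s.orderEmbOfFin h).injective]

theorem card_filter_le_eq_card_filter_lt_add (s : Finset α) (a : α) :
    #{x ∈ s | a ≤ x} = #{x ∈ s | a < x} + if a ∈ s then 1 else 0 := by
  split_ifs with ha
  · rw [← card_insert_of_notMem (s := {x ∈ s | a < x}) (a := a) (by simp)]
    congr 1
    ext x
    simp only [mem_filter, mem_insert, le_iff_lt_or_eq]
    aesop
  · congr 1
    refine filter_congr fun x hx => ?_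
    rw [le_iff_lt_or_eq]
    exact or_iff_left (by rintro rfl; exact ha hx)

end Finset

-- `{w(1), …, w(n)}` shifted down by one: as in `jjf`, the value `v : Fin (2*n)` stands for `v + 1`.
def firstHalfImage (n : ℕ) (w : Equiv.Perm (Fin (2*n))) : Finset (Fin (2*n)) :=
  (Finset.univ.filter (fun i : Fin (2*n) => (i : ℕ) < n)).image w

section

variable {n : ℕ} {w : Equiv.Perm (Fin (2*n))}

theorem Wcond.apply_rev (hw : Wcond n w) (i : Fin (2*n)) : w i.rev = (w i).rev := by
  have := hw i
  ext
  rw [Fin.val_rev]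
  omega

theorem mem_firstHalfImage (v : Fin (2*n)) :
    v ∈ firstHalfImage n w ↔ (w.symm v : ℕ) < n := by
  simp [firstHalfImage, ← w.eq_symm_apply]

theorem Wcond.rev_mem_firstHalfImage_iff (hw : Wcond n w) (v : Fin (2*n)) :
    v.rev ∈ firstHalfImage n w ↔ v ∉ firstHalfImage n w := by
  have hsymm : w.symm v.rev = (w.symm v).rev := by
    rw [w.symm_apply_eq, hw.apply_rev, w.apply_symm_apply]
  rw [mem_firstHalfImage, mem_firstHalfImage, hsymm, Fin.val_rev]
  omega

theorem card_firstHalfImage : #(firstHalfImage n w) = n := by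
  rw [firstHalfImage, card_image_of_injective _ w.injective, Fin.card_filter_val_lt]
  omega

theorem jjf_succ (i : Fin n) :
    jjf n w (i + 1) = (firstHalfImage n w).orderEmbOfFin card_firstHalfImage i + 1 := by
  have hi : (i : ℕ) < ((firstHalfImage n w).sort (· ≤ ·)).length := by
    simp [card_firstHalfImage]
  rw [firstHalfImage] at hi
  simp [jjf, firstHalfImage, orderEmbOfFin_apply, ← List.map_eq_flatMap,
    List.getElem?_eq_getElem hi]

theorem pval_eq_card_filter_lt (hn : 1 ≤ n) :
    pval n w = #{y ∈ firstHalfImage n w | (⟨n, by omega⟩ : Fin (2*n)) < y} := by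
  rw [← card_filter_orderEmbOfFin card_firstHalfImage, pval]
  symm
  apply card_bij (fun (i : Fin n) _ => (i : ℕ) + 1)
  · intro i hi
    simp only [mem_filter, mem_univ, true_and, mem_Icc, jjf_succ, Fin.lt_def] at hi ⊢
    omega
  · intro i _ j _ hij
    exact Fin.ext (Nat.succ_injective hij)
  · intro k hk
    simp only [mem_filter, mem_Icc] at hk
    obtain ⟨⟨hk1, hkn⟩, hjk⟩ := hk
    refine ⟨⟨k - 1, by omega⟩, ?_, by simp only; omega⟩
    have := jjf_succ (w := w) ⟨k - 1, by omega⟩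
    simp only [Nat.sub_add_cancel hk1] at this
    simp only [mem_filter, mem_univ, true_and, Fin.lt_def]
    omega

theorem wpar_iff_even_card_filter_le (hn : 1 ≤ n) :
    Wpar n w ↔ Even #{y ∈ firstHalfImage n w | (⟨n, by omega⟩ : Fin (2*n)) ≤ y} := by
  rw [Wpar, firstHalfImage, filter_image, card_image_of_injective _ w.injective, filter_filter]
  rfl

theorem jjf_sub_pval_of_mem {x : Fin (2*n)} (hx : x ∈ firstHalfImage n w)
    (hcard : #{y ∈ firstHalfImage n w | x < y} = pval n w) :
    jjf n w (n - pval n w) = x + 1 := by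
  obtain ⟨i, rfl⟩ : x ∈ Set.range ((firstHalfImage n w).orderEmbOfFin card_firstHalfImage) := by
    simpa using hx
  rw [card_filter_orderEmbOfFin_lt] at hcard
  have := i.isLt
  rw [show n - pval n w = i + 1 by omega, jjf_succ]

theorem Wcond.jjf_sub_pval (hn : 1 ≤ n) (hw : Wcond n w) :
    jjf n w (n - pval n w) =
      if (⟨n, by omega⟩ : Fin (2*n)) ∈ firstHalfImage n w then n + 1 else n := by
  set mid : Fin (2*n) := ⟨n, by omega⟩
  have hmid_val : (mid : ℕ) = n := rfl
  have hp := (pval_eq_card_filter_lt (w := w) hn).symm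
  split_ifs with hmid
  · exact jjf_sub_pval_of_mem hmid hp
  · have hrev_val : (mid.rev : ℕ) = n - 1 := by
      rw [Fin.val_rev]
      omega
    rw [jjf_sub_pval_of_mem ((hw.rev_mem_firstHalfImage_iff mid).2 hmid)]
    · omega
    rw [← hp]
    refine congrArg card (filter_congr fun y hy => ?_)
    -- `mid.rev = mid - 1`, so the two filters can only differ at `mid`, which is not in the set
    have : (y : ℕ) ≠ n := fun h => hmid (Fin.ext (h.trans hmid_val.symm) ▸ hy)
    rw [Fin.lt_def, Fin.lt_def]
    omega

theorem Wpar.mem_firstHalfImage_iff_odd (hn : 1 ≤ n) (hpar : Wpar n w) :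
    (⟨n, by omega⟩ : Fin (2*n)) ∈ firstHalfImage n w ↔ Odd (pval n w) := by
  rw [wpar_iff_even_card_filter_le hn, card_filter_le_eq_card_filter_lt_add,
    ← pval_eq_card_filter_lt hn] at hpar
  split_ifs at hpar with hmid
  · simpa [hmid, Nat.even_add_one] using hpar
  · simpa [hmid] using hpar

end

theorem stmt9 (n : ℕ) (hn : 1 ≤ n) (w : Equiv.Perm (Fin (2*n)))
    (hw : Wcond n w) (hpar : Wpar n w) :
    (jjf n w (n - pval n w) = n ∨ jjf n w (n - pval n w) = n + 1) ∧
    (jjf n w (n - pval n w) = n ↔ Even (pval n w)) ∧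
    (jjf n w (n - pval n w) = n + 1 ↔ Odd (pval n w)) ∧
    lamf n w (pval n w + 1) = (pval n w : ℤ) := by
  have hj := hw.jjf_sub_pval hn
  have hodd := hpar.mem_firstHalfImage_iff_odd hn
  have hp_le : pval n w ≤ n := (card_filter_le _ _).trans (by simp)
  rw [lamf, show n + 1 - (pval n w + 1) = n - pval n w by omega]
  rcases Nat.even_or_odd (pval n w) with hp | hp
  · rw [hj, if_neg (mt hodd.1 (Nat.not_odd_iff_even.2 hp))]
    refine ⟨.inl rfl, iff_of_true rfl hp, iff_of_false (by omega) (Nat.not_odd_iff_even.2 hp), ?_⟩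
    rw [if_pos le_rfl]
    omega
  · rw [hj, if_pos (hodd.2 hp)]
    refine ⟨.inr rfl, iff_of_false (by omega) (Nat.not_even_iff_odd.2 hp), iff_of_true rfl hp, ?_⟩
    rw [if_neg (by omega)]
    omega
end

section
/- (Symmetry of 2-reduced Schur functions) For any partition λ, the 2-reduced Schur function satisfies S_λ(t) = S_{λ'}(t), where λ' is the conjugate partition and t = (t_1, t_3, …) are the odd power-sum (Sato) variables. -/
open Finset

noncomputable def genF (t : ℕ → ℂ) (m : ℕ) : PowerSeries ℂ :=
  ∑ k ∈ Finset.Icc 1 m, (PowerSeries.monomial (2*k-1)) (t (2*k-1))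

noncomputable def qq (t : ℕ → ℂ) (m : ℕ) : ℂ :=
  ∑ k ∈ Finset.range (m+1), PowerSeries.coeff m (genF t m ^ k) / (Nat.factorial k : ℂ)

noncomputable def qZ (t : ℕ → ℂ) (m : ℤ) : ℂ := if 0 ≤ m then qq t m.toNat else 0

noncomputable def Sdet (t : ℕ → ℂ) (N : ℕ) (lam : ℕ → ℕ) : ℂ :=
  Matrix.det (Matrix.of fun i j : Fin N =>
    qZ t ((lam ((i:ℕ)+1) : ℤ) - ((i:ℕ)+1) + ((j:ℕ)+1)))

def frob (p : ℕ) (β γ : ℕ → ℕ) (i : ℕ) : ℕ :=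
  if 1 ≤ i ∧ i ≤ p then β i + i
  else ((Finset.Icc 1 p).filter (fun k => i ≤ γ k + k)).card

lemma coeff_genF (t : ℕ → ℂ) (m n : ℕ) :
    PowerSeries.coeff n (genF t m) = if Odd n ∧ n ≤ 2*m - 1 then t n else 0 := by
  unfold genF
  rw [map_sum]
  simp_rw [PowerSeries.coeff_monomial]
  by_cases h : Odd n ∧ n ≤ 2*m - 1
  · obtain ⟨⟨c, hc⟩, hn⟩ := h
    rw [Finset.sum_eq_single (c+1)]
    · have hh : n = 2*(c+1)-1 := by omega
      rw [if_pos hh, if_pos ⟨⟨c, hc⟩, hn⟩, ← hh]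
    · intro b hb hbne
      rw [if_neg]
      simp only [mem_Icc] at hb
      omega
    · intro hc1
      simp only [mem_Icc] at hc1
      omega
  · rw [if_neg h]
    apply Finset.sum_eq_zero
    intro k hk
    simp only [mem_Icc] at hk
    rw [if_neg]
    intro heq
    apply h
    constructor
    · exact ⟨k-1, by omega⟩
    · omega

lemma coeff_genF_congr (t : ℕ → ℂ) {m M n : ℕ} (h : n ≤ m) (h2 : m ≤ M) :
    PowerSeries.coeff n (genF t m) = PowerSeries.coeff n (genF t M) := by
  rw [coeff_genF, coeff_genF]
  by_cases ho : Odd n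
  · obtain ⟨c, hc⟩ := ho
    have h1 : n ≤ 2*m-1 := by omega
    have h2' : n ≤ 2*M-1 := by omega
    rw [if_pos ⟨⟨c, hc⟩, h1⟩, if_pos ⟨⟨c, hc⟩, h2'⟩]
  · rw [if_neg (fun hh => ho hh.1), if_neg (fun hh => ho hh.1)]

lemma coeff_pow_congr {A B : PowerSeries ℂ} {d : ℕ}
    (h : ∀ n, n ≤ d → PowerSeries.coeff n A = PowerSeries.coeff n B) (a : ℕ) :
    ∀ i, i ≤ d → PowerSeries.coeff i (A^a) = PowerSeries.coeff i (B^a) := by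
  induction a with
  | zero => intro i _; simp
  | succ a ih =>
    intro i hi
    rw [pow_succ, pow_succ, PowerSeries.coeff_mul, PowerSeries.coeff_mul]
    apply Finset.sum_congr rfl
    intro p hp
    rw [Finset.HasAntidiagonal.mem_antidiagonal] at hp
    rw [ih p.1 (by omega), h p.2 (by omega)]

lemma constantCoeff_genF (t : ℕ → ℂ) (m : ℕ) :
    PowerSeries.coeff 0 (genF t m) = 0 := by
  rw [coeff_genF, if_neg]
  rintro ⟨⟨c, hc⟩, -⟩
  omega

lemma coeff_pow_zero_of_lt {F : PowerSeries ℂ} (hF : PowerSeries.coeff 0 F = 0) :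
    ∀ k m : ℕ, m < k → PowerSeries.coeff m (F^k) = 0 := by
  intro k
  induction k with
  | zero => intro m hm; omega
  | succ k ih =>
    intro m hm
    rw [pow_succ, PowerSeries.coeff_mul]
    apply Finset.sum_eq_zero
    intro p hp
    rw [Finset.HasAntidiagonal.mem_antidiagonal] at hp
    by_cases hq : p.2 = 0
    · have : PowerSeries.coeff p.2 F = 0 := by rw [hq]; exact hF
      rw [this, mul_zero]
    · rw [ih p.1 (by omega), zero_mul]

lemma coeff_pow_zero_of_lt' (t : ℕ → ℂ) (M : ℕ) :
    ∀ k m : ℕ, m < k → PowerSeries.coeff m ((genF t M)^k) = 0 :=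
  fun k m h => coeff_pow_zero_of_lt (constantCoeff_genF t M) k m h

lemma coeff_genF_pow_parity (t : ℕ → ℂ) (m : ℕ) :
    ∀ b j : ℕ, Odd (j + b) → PowerSeries.coeff j ((genF t m)^b) = 0 := by
  intro b
  induction b with
  | zero =>
    intro j hj
    have : j ≠ 0 := by rintro rfl; simp [Nat.odd_iff] at hj
    rw [pow_zero, PowerSeries.coeff_one, if_neg this]
  | succ b ih =>
    intro j hj
    rw [pow_succ, PowerSeries.coeff_mul]
    apply Finset.sum_eq_zero
    intro p hp
    rw [Finset.HasAntidiagonal.mem_antidiagonal] at hp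
    by_cases h2 : Odd p.2
    · rw [ih p.1 (by rw [Nat.odd_iff] at *; omega), zero_mul]
    · have : PowerSeries.coeff p.2 (genF t m) = 0 := by
        rw [coeff_genF, if_neg (fun hh => h2 hh.1)]
      rw [this, mul_zero]

lemma qq_eq (t : ℕ → ℂ) {m M K : ℕ} (hM : m ≤ M) (hK : m ≤ K) :
    qq t m = ∑ k ∈ Finset.range (K+1), PowerSeries.coeff m ((genF t M)^k) / (Nat.factorial k : ℂ) := by
  unfold qq
  rw [← Finset.sum_subset (Finset.range_subset_range.2 (by omega) :
      Finset.range (m+1) ⊆ Finset.range (K+1))]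
  · apply Finset.sum_congr rfl
    intro k hk
    congr 1
    exact coeff_pow_congr (fun n hn => coeff_genF_congr t hn hM) k m le_rfl
  · intro k hk hknot
    simp only [mem_range] at hk hknot
    rw [coeff_pow_zero_of_lt (constantCoeff_genF t M) k m (by omega), zero_div]

lemma neg_pow_parity {j b : ℕ} (h : (j+b) % 2 = 0) : (-1:ℂ)^j = (-1)^b := by
  rcases Nat.even_or_odd j with hj|hj
  · have hb : Even b := by rw [Nat.even_iff] at *; omega
    rw [hj.neg_one_pow, hb.neg_one_pow]
  · have hb : Odd b := by rw [Nat.odd_iff] at *; omega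
    rw [hj.neg_one_pow, hb.neg_one_pow]

lemma alt_sum {k : ℕ} (hk : 1 ≤ k) :
    ∑ p ∈ Finset.HasAntidiagonal.antidiagonal k, (-1:ℂ)^p.2 / (Nat.factorial p.1 * Nat.factorial p.2) = 0 := by
  rw [Finset.Nat.sum_antidiagonal_eq_sum_range_succ_mk]
  have h1 : ∀ i ∈ Finset.range (k+1), (-1:ℂ)^(k-i) / (Nat.factorial i * Nat.factorial (k-i))
      = (-1)^(k-i) * (k.choose i) / (Nat.factorial k) := by
    intro i hi
    rw [Finset.mem_range] at hi
    have hik : i ≤ k := by omega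
    have hnat := Nat.choose_mul_factorial_mul_factorial hik
    have hc : ((k.choose i : ℂ)) * (Nat.factorial i) * (Nat.factorial (k-i)) = (Nat.factorial k) := by
      exact_mod_cast hnat
    have h2 : ((Nat.factorial i : ℂ)) ≠ 0 := Nat.cast_ne_zero.2 (Nat.factorial_ne_zero i)
    have h3 : ((Nat.factorial (k-i) : ℂ)) ≠ 0 := Nat.cast_ne_zero.2 (Nat.factorial_ne_zero _)
    have h4 : ((Nat.factorial k : ℂ)) ≠ 0 := Nat.cast_ne_zero.2 (Nat.factorial_ne_zero _)
    rw [div_eq_div_iff (mul_ne_zero h2 h3) h4]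
    linear_combination (-(-1:ℂ)^(k-i)) * hc
  rw [Finset.sum_congr rfl h1]
  simp_rw [div_eq_mul_inv, ← Finset.sum_mul]
  have hnum : (∑ i ∈ Finset.range (k+1), (-1:ℂ)^(k-i) * (k.choose i)) = 0 := by
    have hswap : (∑ i ∈ Finset.range (k+1), (-1:ℂ)^(k-i) * (k.choose i))
        = ∑ i ∈ Finset.range (k+1), (-1:ℂ)^i * (k.choose i) := by
      rw [← Finset.sum_range_reflect]
      apply Finset.sum_congr rfl
      intro j hj
      rw [Finset.mem_range] at hj
      have hjk : j ≤ k := by omega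
      have e1 : k + 1 - 1 - j = k - j := by omega
      have e2 : k - (k - j) = j := by omega
      rw [e1, e2, Nat.choose_symm hjk]
    rw [hswap]
    have hint := Int.alternating_sum_range_choose (n := k)
    rw [if_neg (by omega)] at hint
    calc (∑ i ∈ Finset.range (k+1), (-1:ℂ)^i * (k.choose i))
        = ((∑ i ∈ Finset.range (k+1), (-1:ℤ)^i * (k.choose i) : ℤ) : ℂ) := by push_cast; ring
      _ = 0 := by rw [hint]; simp
  rw [hnum, zero_mul]

lemma qq_conv (t : ℕ → ℂ) {m : ℕ} (hm : 1 ≤ m) :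
    ∑ s ∈ Finset.range (m+1), (-1:ℂ)^(m-s) * qq t s * qq t (m-s) = 0 := by
  set F := genF t m with hFdef
  have hq : ∀ s, s ≤ m → qq t s
      = ∑ k ∈ Finset.range (m+1), PowerSeries.coeff s (F^k) / (Nat.factorial k : ℂ) :=
    fun s hs => qq_eq t hs hs
  have key : ∀ a b : ℕ, (∑ s ∈ Finset.range (m+1),
      PowerSeries.coeff s (F^a) * PowerSeries.coeff (m-s) (F^b))
      = PowerSeries.coeff m (F^(a+b)) := by
    intro a b
    rw [pow_add, PowerSeries.coeff_mul, Finset.Nat.sum_antidiagonal_eq_sum_range_succ_mk]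
  have step1 : ∑ s ∈ Finset.range (m+1), (-1:ℂ)^(m-s) * qq t s * qq t (m-s)
      = ∑ s ∈ Finset.range (m+1), ∑ a ∈ Finset.range (m+1), ∑ b ∈ Finset.range (m+1),
        (-1:ℂ)^b * (PowerSeries.coeff s (F^a) / (Nat.factorial a) *
          (PowerSeries.coeff (m-s) (F^b) / (Nat.factorial b))) := by
    apply Finset.sum_congr rfl
    intro s hs
    rw [Finset.mem_range] at hs
    rw [hq s (by omega), hq (m-s) (by omega), mul_assoc, Finset.sum_mul_sum,
      Finset.mul_sum]
    apply Finset.sum_congr rfl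
    intro a _
    rw [Finset.mul_sum]
    apply Finset.sum_congr rfl
    intro b _
    by_cases hz : PowerSeries.coeff (m-s) (F^b) = 0
    · rw [hz]; ring
    · have hpar : ¬ Odd ((m-s) + b) := fun hodd => hz (coeff_genF_pow_parity t m b (m-s) hodd)
      rw [Nat.odd_iff] at hpar
      have := neg_pow_parity (j := m-s) (b := b) (by omega)
      rw [this]
  rw [step1]
  rw [Finset.sum_comm]
  have step2 : ∀ a ∈ Finset.range (m+1), (∑ s ∈ Finset.range (m+1), ∑ b ∈ Finset.range (m+1),
        (-1:ℂ)^b * (PowerSeries.coeff s (F^a) / (Nat.factorial a) *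
          (PowerSeries.coeff (m-s) (F^b) / (Nat.factorial b))))
      = ∑ b ∈ Finset.range (m+1),
        (-1:ℂ)^b / (Nat.factorial a * Nat.factorial b) * PowerSeries.coeff m (F^(a+b)) := by
    intro a _
    rw [Finset.sum_comm]
    apply Finset.sum_congr rfl
    intro b _
    rw [← key a b, Finset.mul_sum]
    apply Finset.sum_congr rfl
    intro s _
    ring
  rw [Finset.sum_congr rfl step2, ← Finset.sum_product']
  have hz : ∀ p ∈ Finset.range (m+1) ×ˢ Finset.range (m+1),
      p ∉ (Finset.range (m+1) ×ˢ Finset.range (m+1)).filter (fun p => p.1 + p.2 ≤ m) →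
      (-1:ℂ)^p.2 / (Nat.factorial p.1 * Nat.factorial p.2)
        * PowerSeries.coeff m (F^(p.1+p.2)) = 0 := by
    intro p hp hpn
    have : ¬ (p.1 + p.2 ≤ m) := by
      intro hle; exact hpn (Finset.mem_filter.2 ⟨hp, hle⟩)
    rw [coeff_pow_zero_of_lt' t m _ m (by omega), mul_zero]
  rw [← Finset.sum_subset (Finset.filter_subset _ _) hz]
  have hset : (Finset.range (m+1) ×ˢ Finset.range (m+1)).filter (fun p => p.1 + p.2 ≤ m)
      = (Finset.range (m+1)).biUnion (fun k => Finset.HasAntidiagonal.antidiagonal k) := by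
    ext p
    simp only [Finset.mem_filter, Finset.mem_product, Finset.mem_biUnion, Finset.mem_range,
      Finset.HasAntidiagonal.mem_antidiagonal]
    constructor
    · rintro ⟨⟨h1, h2⟩, h3⟩
      exact ⟨p.1 + p.2, by omega, rfl⟩
    · rintro ⟨k, hk, hpk⟩
      omega
  rw [hset, Finset.sum_biUnion]
  · apply Finset.sum_eq_zero
    intro k hk
    rw [Finset.mem_range] at hk
    by_cases hk0 : k = 0
    · subst hk0
      apply Finset.sum_eq_zero
      intro p hp
      rw [Finset.HasAntidiagonal.mem_antidiagonal] at hp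
      rw [hp]
      rw [pow_zero, PowerSeries.coeff_one, if_neg (by omega : m ≠ 0), mul_zero]
    · have : ∀ p ∈ Finset.HasAntidiagonal.antidiagonal k,
          (-1:ℂ)^p.2 / (Nat.factorial p.1 * Nat.factorial p.2)
            * PowerSeries.coeff m (F^(p.1+p.2))
          = (-1:ℂ)^p.2 / (Nat.factorial p.1 * Nat.factorial p.2)
            * PowerSeries.coeff m (F^k) := by
        intro p hp
        rw [Finset.HasAntidiagonal.mem_antidiagonal] at hp
        rw [hp]
      rw [Finset.sum_congr rfl this, ← Finset.sum_mul, alt_sum (by omega), zero_mul]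
  · intro x hx y hy hxy
    apply Finset.disjoint_left.2
    intro p hpx hpy
    rw [Finset.HasAntidiagonal.mem_antidiagonal] at hpx hpy
    exact hxy (by omega)

lemma qq_zero (t : ℕ → ℂ) : qq t 0 = 1 := by
  unfold qq
  rw [Finset.sum_range_one, pow_zero]
  simp

lemma qZ_neg (t : ℕ → ℂ) {m : ℤ} (h : m < 0) : qZ t m = 0 := by
  rw [qZ, if_neg (by omega)]

lemma qZ_coe (t : ℕ → ℂ) (n : ℕ) : qZ t n = qq t n := by
  rw [qZ, if_pos (by omega)]
  simp

noncomputable def Hm (t : ℕ → ℂ) (L : ℕ) : Matrix (Fin L) (Fin L) ℂ :=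
  Matrix.of fun i j => qZ t (((j:ℕ):ℤ) - ((i:ℕ):ℤ))

noncomputable def Em (t : ℕ → ℂ) (L : ℕ) : Matrix (Fin L) (Fin L) ℂ :=
  Matrix.of fun i j => (-1:ℂ)^((j:ℕ) - (i:ℕ)) * qZ t (((j:ℕ):ℤ) - ((i:ℕ):ℤ))

lemma Hm_mul_Em (t : ℕ → ℂ) (L : ℕ) : Hm t L * Em t L = 1 := by
  ext i j
  rw [Matrix.mul_apply]
  have hstep : ∀ k : Fin L, Hm t L i k * Em t L k j
      = (fun k : ℕ => qZ t ((k:ℤ) - ((i:ℕ):ℤ)) *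
          ((-1:ℂ)^((j:ℕ) - k) * qZ t (((j:ℕ):ℤ) - (k:ℤ)))) (k:ℕ) := by
    intro k
    rfl
  rw [Finset.sum_congr rfl (fun k _ => hstep k),
    Fin.sum_univ_eq_sum_range (fun k : ℕ => qZ t ((k:ℤ) - ((i:ℕ):ℤ)) *
      ((-1:ℂ)^((j:ℕ) - k) * qZ t (((j:ℕ):ℤ) - (k:ℤ)))) L]
  by_cases hij : (i:ℕ) ≤ (j:ℕ)
  · have hjL : (j:ℕ) < L := j.isLt
    have hsub : Finset.Icc (i:ℕ) (j:ℕ) ⊆ Finset.range L := by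
      intro k hk
      rw [Finset.mem_Icc] at hk
      rw [Finset.mem_range]
      omega
    rw [← Finset.sum_subset hsub (by
      intro k hkr hk
      rw [Finset.mem_Icc] at hk
      rcases not_and_or.1 hk with h | h
      · rw [qZ_neg t (by omega : (k:ℤ) - ((i:ℕ):ℤ) < 0)]
        ring
      · rw [qZ_neg t (by omega : ((j:ℕ):ℤ) - (k:ℤ) < 0)]
        ring)]
    rw [← Finset.Ico_add_one_right_eq_Icc, Finset.sum_Ico_eq_sum_range]
    set m := (j:ℕ) - (i:ℕ) with hm
    have hrange : (j:ℕ) + 1 - (i:ℕ) = m + 1 := by omega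
    rw [hrange]
    have hterm : ∀ s ∈ Finset.range (m+1),
        (fun k : ℕ => qZ t ((k:ℤ) - ((i:ℕ):ℤ)) *
          ((-1:ℂ)^((j:ℕ) - k) * qZ t (((j:ℕ):ℤ) - (k:ℤ)))) ((i:ℕ) + s)
        = qq t s * ((-1:ℂ)^(m-s) * qq t (m-s)) := by
      intro s hs
      rw [Finset.mem_range] at hs
      simp only
      have e1 : ((((i:ℕ)+s : ℕ)):ℤ) - ((i:ℕ):ℤ) = ((s:ℕ):ℤ) := by push_cast; ring
      have e2 : ((j:ℕ):ℤ) - ((((i:ℕ)+s : ℕ)):ℤ) = ((m - s : ℕ):ℤ) := by omega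
      have e3 : (j:ℕ) - ((i:ℕ)+s) = m - s := by omega
      rw [e1, e2, e3, qZ_coe, qZ_coe]
    rw [Finset.sum_congr rfl hterm]
    by_cases hm0 : m = 0
    · have hij' : i = j := by
        apply Fin.ext; omega
      have h1 : (1 : Matrix (Fin L) (Fin L) ℂ) i j = 1 := by
        rw [hij']; exact Matrix.one_apply_eq j
      rw [h1, hm0, Finset.sum_range_one]
      simp [qq_zero]
    · rw [Matrix.one_apply_ne (by
        intro h
        apply hm0
        have := congrArg Fin.val h
        omega)]
      calc ∑ s ∈ Finset.range (m+1), qq t s * ((-1:ℂ)^(m-s) * qq t (m-s))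
          = ∑ s ∈ Finset.range (m+1), (-1:ℂ)^(m-s) * qq t s * qq t (m-s) := by
            apply Finset.sum_congr rfl; intros; ring
        _ = 0 := qq_conv t (by omega)
  · have hji : (j:ℕ) < (i:ℕ) := by omega
    rw [Matrix.one_apply_ne (by
      intro h
      have := congrArg Fin.val h
      omega)]
    apply Finset.sum_eq_zero
    intro k _
    by_cases hk : k < (i:ℕ)
    · rw [qZ_neg t (by omega : (k:ℤ) - ((i:ℕ):ℤ) < 0)]
      ring
    · rw [qZ_neg t (by omega : ((j:ℕ):ℤ) - (k:ℤ) < 0)]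
      ring

lemma det_Hm (t : ℕ → ℂ) (L : ℕ) : (Hm t L).det = 1 := by
  rw [Matrix.det_of_upperTriangular]
  · apply Finset.prod_eq_one
    intro i _
    rw [Hm, Matrix.of_apply, sub_self, qZ, if_pos le_rfl]
    simpa using qq_zero t
  · intro i j hij
    have : (j:ℕ) < (i:ℕ) := hij
    rw [Hm, Matrix.of_apply, qZ_neg t (by omega)]

lemma jacobi_block {α β : Type*} [Fintype α] [Fintype β] [DecidableEq α] [DecidableEq β]
    (A B : Matrix (α ⊕ β) (α ⊕ β) ℂ) (hAB : A * B = 1) :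
    A.det * (B.toBlocks₁₁).det = (A.toBlocks₂₂).det := by
  have h : Matrix.fromBlocks A.toBlocks₁₁ A.toBlocks₁₂ A.toBlocks₂₁ A.toBlocks₂₂ *
      Matrix.fromBlocks B.toBlocks₁₁ B.toBlocks₁₂ B.toBlocks₂₁ B.toBlocks₂₂
      = Matrix.fromBlocks 1 0 0 1 := by
    rw [Matrix.fromBlocks_toBlocks, Matrix.fromBlocks_toBlocks, Matrix.fromBlocks_one]
    exact hAB
  rw [Matrix.fromBlocks_multiply] at h
  have h1 := congrArg Matrix.toBlocks₁₁ h
  have h2 := congrArg Matrix.toBlocks₂₁ h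
  simp only [Matrix.toBlocks_fromBlocks₁₁, Matrix.toBlocks_fromBlocks₂₁] at h1 h2
  have hprod : A * (Matrix.fromBlocks B.toBlocks₁₁ 0 B.toBlocks₂₁ 1)
      = Matrix.fromBlocks 1 A.toBlocks₁₂ 0 A.toBlocks₂₂ := by
    conv_lhs => rw [← Matrix.fromBlocks_toBlocks A]
    rw [Matrix.fromBlocks_multiply]
    rw [h1, h2]
    congr 1 <;> simp
  have hdet := congrArg Matrix.det hprod
  rw [Matrix.det_mul, Matrix.det_fromBlocks_zero₁₂, Matrix.det_fromBlocks_zero₂₁] at hdet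
  simpa using hdet

noncomputable def t0 : ℕ → ℂ := fun n => if n = 1 then 1 else 0

lemma genF_t0 (m : ℕ) (hm : 1 ≤ m) : genF t0 m = PowerSeries.X := by
  unfold genF
  rw [Finset.sum_eq_single 1]
  · have h1 : t0 (2*1-1) = 1 := by norm_num [t0]
    rw [h1]
    norm_num
    exact PowerSeries.X_eq.symm
  · intro b hb hb1
    rw [Finset.mem_Icc] at hb
    have : t0 (2*b-1) = 0 := by
      rw [t0, if_neg (by omega)]
    rw [this, map_zero]
  · intro h1
    exact absurd (Finset.mem_Icc.2 ⟨le_rfl, hm⟩) h1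

lemma qq_t0 (m : ℕ) : qq t0 m = 1 / (Nat.factorial m : ℂ) := by
  by_cases hm : m = 0
  · subst hm; rw [qq_zero]; simp
  · unfold qq
    rw [Finset.sum_congr rfl (fun k _ => by rw [genF_t0 m (by omega)])]
    rw [Finset.sum_eq_single m]
    · rw [PowerSeries.coeff_X_pow, if_pos rfl]
    · intro k _ hk
      rw [PowerSeries.coeff_X_pow, if_neg (fun h => hk h.symm), zero_div]
    · intro h
      exact absurd (Finset.mem_range.2 (by omega)) h

lemma qZ_t0_descFact (c d : ℕ) :
    qZ t0 ((c:ℤ) - (d:ℤ)) = (c.descFactorial d : ℂ) / (c.factorial : ℂ) := by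
  by_cases h : d ≤ c
  · have e : (c:ℤ) - (d:ℤ) = ((c - d : ℕ):ℤ) := by omega
    rw [e, qZ_coe, qq_t0]
    have hfac : (c - d).factorial * c.descFactorial d = c.factorial :=
      Nat.factorial_mul_descFactorial h
    have h1 : ((c-d).factorial : ℂ) ≠ 0 := Nat.cast_ne_zero.2 (Nat.factorial_ne_zero _)
    have h2 : (c.factorial : ℂ) ≠ 0 := Nat.cast_ne_zero.2 (Nat.factorial_ne_zero _)
    rw [div_eq_div_iff h1 h2, one_mul]
    have hfac2 : c.descFactorial d * (c-d).factorial = c.factorial := by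
      rw [Nat.mul_comm]; exact hfac
    exact_mod_cast hfac2.symm
  · rw [qZ_neg _ (by omega), Nat.descFactorial_eq_zero_iff_lt.2 (by omega)]
    simp

lemma anti_of_step (μ : ℕ → ℕ) (h : ∀ k, 1 ≤ k → μ (k+1) ≤ μ k) :
    ∀ a b, 1 ≤ a → a ≤ b → μ b ≤ μ a := by
  intro a b ha hab
  obtain ⟨d, rfl⟩ := Nat.exists_eq_add_of_le hab
  clear hab
  induction d with
  | zero => simp
  | succ d ih =>
    calc μ (a + (d+1)) ≤ μ (a + d) := h (a+d) (by omega)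
      _ ≤ μ a := ih

lemma Sdet_t0_pos (N : ℕ) (μ : ℕ → ℕ) (hanti : ∀ k, 1 ≤ k → μ (k+1) ≤ μ k) :
    ∃ r : ℝ, 0 < r ∧ Sdet t0 N μ = (r : ℂ) := by
  classical
  set c : Fin N → ℕ := fun i => μ (i.val+1) + (N - 1 - i.val) with hc
  have hcdec : ∀ i j : Fin N, i < j → c j < c i := by
    intro i j hij
    have h1 : μ (j.val+1) ≤ μ (i.val+1) :=
      anti_of_step μ hanti (i.val+1) (j.val+1) (by omega) (by
        have : (i:ℕ) < (j:ℕ) := hij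
        omega)
    have h2 : (j:ℕ) < N := j.isLt
    have h3 : (i:ℕ) < (j:ℕ) := hij
    simp only [hc]
    omega
  -- the Sdet matrix equals row-scaled descFactorial matrix
  have hentry : ∀ i j : Fin N,
      qZ t0 ((μ ((i:ℕ)+1) : ℤ) - ((i:ℕ)+1) + ((j:ℕ)+1))
      = (1 / ((c i).factorial : ℂ)) * ((c i).descFactorial (N - 1 - (j:ℕ)) : ℂ) := by
    intro i j
    have e : ((μ ((i:ℕ)+1) : ℤ)) - ((i:ℕ)+1) + ((j:ℕ)+1)
        = ((c i : ℕ):ℤ) - ((N - 1 - (j:ℕ) : ℕ):ℤ) := by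
      have h2 : (j:ℕ) < N := j.isLt
      have h3 : (i:ℕ) < N := i.isLt
      simp only [hc]
      push_cast
      omega
    rw [e, qZ_t0_descFact]
    ring
  have hSdet : Sdet t0 N μ
      = (∏ i : Fin N, (1 / ((c i).factorial : ℂ))) *
        (Matrix.of (fun i j : Fin N => ((c i).descFactorial (N - 1 - (j:ℕ)) : ℂ))).det := by
    rw [Sdet]
    rw [show (Matrix.of fun i j : Fin N =>
        qZ t0 ((μ ((i:ℕ)+1) : ℤ) - ((i:ℕ)+1) + ((j:ℕ)+1)))
      = Matrix.of (fun i j : Fin N => (1 / ((c i).factorial : ℂ)) *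
          ((c i).descFactorial (N - 1 - (j:ℕ)) : ℂ)) from by
      ext i j
      exact hentry i j]
    exact Matrix.det_mul_column _ _
  set D := Matrix.of (fun i j : Fin N => ((c i).descFactorial (N - 1 - (j:ℕ)) : ℂ)) with hD
  have hDsub : D.submatrix (Fin.revPerm : Equiv.Perm (Fin N)) (Fin.revPerm : Equiv.Perm (Fin N))
      = Matrix.of (fun i j : Fin N =>
          (descPochhammer ℂ (j:ℕ)).eval (((c (Fin.rev i)) : ℕ) : ℂ)) := by
    ext i j
    simp only [Matrix.submatrix_apply, Matrix.of_apply, hD, Fin.revPerm_apply]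
    rw [descPochhammer_eval_eq_descFactorial]
    have hj := j.isLt
    have hrev : (N - 1 - ((Fin.rev j) : ℕ)) = (j:ℕ) := by
      rw [Fin.val_rev]; omega
    rw [hrev]
  have hdet2 : D.det
      = ∏ i : Fin N, ∏ j ∈ Finset.Ioi i,
          ((((c (Fin.rev j)) : ℕ) : ℂ) - (((c (Fin.rev i)) : ℕ) : ℂ)) := by
    rw [← Matrix.det_submatrix_equiv_self (Fin.revPerm : Equiv.Perm (Fin N)) D, hDsub,
      ← Matrix.det_eval_matrixOfPolynomials_eq_det_vandermonde
        (fun i : Fin N => (((c (Fin.rev i)) : ℕ) : ℂ))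
        (fun j : Fin N => descPochhammer ℂ (j:ℕ))
        (fun j => descPochhammer_natDegree ℂ _)
        (fun j => monic_descPochhammer ℂ _),
      Matrix.det_vandermonde]
  have hposfac : ∀ i j : Fin N, j ∈ Finset.Ioi i → c (Fin.rev i) < c (Fin.rev j) := by
    intro i j hj
    rw [Finset.mem_Ioi] at hj
    exact hcdec _ _ (Fin.rev_lt_rev.2 hj)
  refine ⟨(∏ i : Fin N, (((c i).factorial : ℝ))⁻¹) *
      ∏ i : Fin N, ∏ j ∈ Finset.Ioi i, ((c (Fin.rev j) - c (Fin.rev i) : ℕ) : ℝ), ?_, ?_⟩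
  · apply mul_pos
    · apply Finset.prod_pos
      intro i _
      apply inv_pos.2
      exact_mod_cast Nat.factorial_pos _
    · apply Finset.prod_pos
      intro i _
      apply Finset.prod_pos
      intro j hj
      have := hposfac i j hj
      exact_mod_cast Nat.sub_pos_of_lt this
  · rw [hSdet, hdet2]
    have hsub : ∀ i : Fin N, ∀ j ∈ Finset.Ioi i,
        ((((c (Fin.rev j)) : ℕ) : ℂ) - (((c (Fin.rev i)) : ℕ) : ℂ))
        = (((c (Fin.rev j) - c (Fin.rev i) : ℕ)) : ℂ) := by
      intro i j hj
      rw [Nat.cast_sub (le_of_lt (hposfac i j hj))]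
    rw [Finset.prod_congr rfl (fun i _ => Finset.prod_congr rfl (hsub i))]
    simp only [one_div]
    push_cast
    ring

lemma conj_le (N : ℕ) (lam : ℕ → ℕ) (hmono : ∀ k, 1 ≤ k → lam (k+1) ≤ lam k) :
    ∀ r k, 1 ≤ r → r ≤ N →
      ((r ≤ ((Finset.Icc 1 N).filter (fun i => k ≤ lam i)).card) ↔ k ≤ lam r) := by
  intro r k hr hrN
  constructor
  · intro hcard
    by_contra hk
    push_neg at hk
    have hsub : ((Finset.Icc 1 N).filter (fun i => k ≤ lam i)) ⊆ Finset.Icc 1 (r-1) := by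
      intro i hi
      rw [Finset.mem_filter, Finset.mem_Icc] at hi
      rw [Finset.mem_Icc]
      rcases le_or_gt r i with h | h
      · exfalso
        have := anti_of_step lam hmono r i hr h
        omega
      · omega
    have := Finset.card_le_card hsub
    rw [Nat.card_Icc] at this
    omega
  · intro hk
    have hsub : Finset.Icc 1 r ⊆ ((Finset.Icc 1 N).filter (fun i => k ≤ lam i)) := by
      intro i hi
      rw [Finset.mem_Icc] at hi
      rw [Finset.mem_filter, Finset.mem_Icc]
      have := anti_of_step lam hmono i r hi.1 hi.2
      exact ⟨⟨hi.1, by omega⟩, by omega⟩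
    have := Finset.card_le_card hsub
    rw [Nat.card_Icc] at this
    omega

lemma key_rel (N : ℕ) (lam : ℕ → ℕ)
    (hmono : ∀ k, 1 ≤ k → lam (k+1) ≤ lam k) (hlen : lam 1 ≤ N) :
    ∃ ε : ℂ, (ε = 1 ∨ ε = -1) ∧ ∀ t, Sdet t N lam
      = ε * Sdet t N (fun k => ((Finset.Icc 1 N).filter (fun i => k ≤ lam i)).card) := by
  classical
  set lam' : ℕ → ℕ := fun k => ((Finset.Icc 1 N).filter (fun i => k ≤ lam i)).card with hlam'
  have hlam'N : ∀ k, lam' k ≤ N := by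
    intro k
    simp only [hlam']
    have := Finset.card_le_card (Finset.filter_subset (fun i => k ≤ lam i) (Finset.Icc 1 N))
    rw [Nat.card_Icc] at this
    omega
  have hlam'anti : ∀ k l, k ≤ l → lam' l ≤ lam' k := by
    intro k l hkl
    simp only [hlam']
    apply Finset.card_le_card
    intro x hx
    rw [Finset.mem_filter] at hx ⊢
    exact ⟨hx.1, le_trans hkl hx.2⟩
  have hlamN : ∀ r, 1 ≤ r → lam r ≤ N := by
    intro r hr
    have := anti_of_step lam hmono 1 r le_rfl hr
    omega
  set L := 2*N with hLdef
  set uval : Fin N → ℕ := fun j => lam' (j.val+1) + (N - 1 - j.val) with huval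
  set xval : Fin N → ℕ := fun i => N + i.val - lam (i.val+1) with hxval
  -- the row arrangement
  have hufin : ∀ j : Fin N, uval j < L := by
    intro j
    have := j.isLt
    have := hlam'N (j.val+1)
    simp only [huval]
    omega
  have hxfin : ∀ i : Fin N, xval i < L := by
    intro i
    have := i.isLt
    simp only [hxval]
    omega
  set ρfun : Fin N ⊕ Fin N → Fin L :=
    Sum.elim (fun j => ⟨uval j, hufin j⟩) (fun i => ⟨xval i, hxfin i⟩) with hρfun
  set κfun : Fin N ⊕ Fin N → Fin L :=
    Sum.elim (fun j => ⟨j.val, by have := j.isLt; omega⟩)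
      (fun j => ⟨N + j.val, by have := j.isLt; omega⟩) with hκfun
  have hcross : ∀ (j i : Fin N), uval j ≠ xval i := by
    intro j i heq
    have hj := j.isLt
    have hi := i.isLt
    have hlN : lam (i.val+1) ≤ N := hlamN _ (by omega)
    rcases le_or_gt (j.val+1) (lam (i.val+1)) with hc | hc
    · have h2 : (i.val+1) ≤ lam' (j.val+1) :=
        (conj_le N lam hmono (i.val+1) (j.val+1) (by omega) (by omega)).2 hc
      simp only [huval, hxval] at heq
      omega
    · have h2 : ¬ ((i.val+1) ≤ lam' (j.val+1)) := by
        intro hcc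
        have := (conj_le N lam hmono (i.val+1) (j.val+1) (by omega) (by omega)).1 (by
          rw [hlam'] at hcc; exact hcc)
        omega
      simp only [huval, hxval] at heq
      omega
  have hρinj : Function.Injective ρfun := by
    rintro (j₁|i₁) (j₂|i₂) h
    · simp only [hρfun, Sum.elim_inl, Fin.mk.injEq] at h
      rcases lt_trichotomy (j₁:ℕ) (j₂:ℕ) with hlt | heq | hgt
      · exfalso
        have := hlam'anti (j₁.val+1) (j₂.val+1) (by omega)
        have := j₂.isLt
        simp only [huval] at h
        omega
      · congr 1; exact Fin.ext heq
      · exfalso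
        have := hlam'anti (j₂.val+1) (j₁.val+1) (by omega)
        have := j₁.isLt
        simp only [huval] at h
        omega
    · exfalso
      simp only [hρfun, Sum.elim_inl, Sum.elim_inr, Fin.mk.injEq] at h
      exact hcross j₁ i₂ h
    · exfalso
      simp only [hρfun, Sum.elim_inl, Sum.elim_inr, Fin.mk.injEq] at h
      exact hcross j₂ i₁ h.symm
    · simp only [hρfun, Sum.elim_inr, Fin.mk.injEq] at h
      rcases lt_trichotomy (i₁:ℕ) (i₂:ℕ) with hlt | heq | hgt
      · exfalso
        have h1 := anti_of_step lam hmono (i₁.val+1) (i₂.val+1) (by omega) (by omega)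
        have h2 : lam (i₁.val+1) ≤ N := hlamN _ (by omega)
        simp only [hxval] at h
        omega
      · congr 1; exact Fin.ext heq
      · exfalso
        have h1 := anti_of_step lam hmono (i₂.val+1) (i₁.val+1) (by omega) (by omega)
        have h2 : lam (i₂.val+1) ≤ N := hlamN _ (by omega)
        simp only [hxval] at h
        omega
  have hκinj : Function.Injective κfun := by
    rintro (j₁|i₁) (j₂|i₂) h <;>
      simp only [hκfun, Sum.elim_inl, Sum.elim_inr, Fin.mk.injEq] at h
    · congr 1; exact Fin.ext h
    · exfalso; have := j₁.isLt; omega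
    · exfalso; have := j₂.isLt; omega
    · congr 1; exact Fin.ext (by omega)
  have hcard : Fintype.card (Fin N ⊕ Fin N) = Fintype.card (Fin L) := by
    simp [hLdef]; omega
  set ρ : (Fin N ⊕ Fin N) ≃ Fin L :=
    Equiv.ofBijective ρfun ((Fintype.bijective_iff_injective_and_card ρfun).2 ⟨hρinj, hcard⟩)
    with hρ
  set κ : (Fin N ⊕ Fin N) ≃ Fin L :=
    Equiv.ofBijective κfun ((Fintype.bijective_iff_injective_and_card κfun).2 ⟨hκinj, hcard⟩)
    with hκ
  set σ₀ : Equiv.Perm (Fin N ⊕ Fin N) := ρ.trans κ.symm with hσ₀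
  set ε₁ : ℂ := ((Equiv.Perm.sign σ₀ : ℤ) : ℂ) with hε₁
  set s₂ : ℂ := ((Equiv.Perm.sign (Fin.revPerm : Equiv.Perm (Fin N)) : ℤ) : ℂ) with hs₂
  set εR : ℂ := ∏ i : Fin N, (-1:ℂ)^(i:ℕ) with hεR
  set εC : ℂ := ∏ j : Fin N, (-1:ℂ)^(uval j) with hεC
  have hpm : ∀ a b : ℂ, (a = 1 ∨ a = -1) → (b = 1 ∨ b = -1) → (a*b = 1 ∨ a*b = -1) := by
    rintro a b (rfl|rfl) (rfl|rfl) <;> norm_num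
  have hsign : ∀ (σ : Equiv.Perm (Fin N ⊕ Fin N)),
      (((Equiv.Perm.sign σ : ℤ) : ℂ) = 1 ∨ ((Equiv.Perm.sign σ : ℤ) : ℂ) = -1) := by
    intro σ
    rcases Int.units_eq_one_or (Equiv.Perm.sign σ) with h | h <;> rw [h] <;> simp
  have hsign' : s₂ = 1 ∨ s₂ = -1 := by
    rcases Int.units_eq_one_or (Equiv.Perm.sign (Fin.revPerm : Equiv.Perm (Fin N))) with h | h <;>
      rw [hs₂, h] <;> simp
  have hprodpm : ∀ (f : Fin N → ℂ), (∀ i, f i = 1 ∨ f i = -1) →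
      ((∏ i : Fin N, f i) = 1 ∨ (∏ i : Fin N, f i) = -1) := by
    intro f hf
    apply Finset.prod_induction f (fun x => x = 1 ∨ x = -1) hpm (Or.inl rfl)
    intro i _
    exact hf i
  have hnegpow : ∀ n : ℕ, ((-1:ℂ)^n = 1 ∨ (-1:ℂ)^n = -1) := by
    intro n
    rcases Nat.even_or_odd n with h | h
    · left; exact h.neg_one_pow
    · right; exact h.neg_one_pow
  set ε : ℂ := ε₁ * εR * εC * s₂ with hε
  have hεpm : ε = 1 ∨ ε = -1 := by
    apply hpm
    apply hpm
    apply hpm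
    · exact hsign σ₀
    · exact hprodpm _ (fun i => hnegpow _)
    · exact hprodpm _ (fun j => hnegpow _)
    · exact hsign'
  have hs₂sq : s₂ * s₂ = 1 := by
    rcases hsign' with h | h <;> rw [h] <;> norm_num
  refine ⟨ε, hεpm, ?_⟩
  intro t
  set A : Matrix (Fin N ⊕ Fin N) (Fin N ⊕ Fin N) ℂ := (Hm t L).submatrix ρ κ with hA
  set B : Matrix (Fin N ⊕ Fin N) (Fin N ⊕ Fin N) ℂ := (Em t L).submatrix κ ρ with hB
  have hAB : A * B = 1 := by
    rw [hA, hB, Matrix.submatrix_mul_equiv, Hm_mul_Em, Matrix.submatrix_one_equiv]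
  -- determinant of A
  have hdetA : A.det = ε₁ := by
    have h1 : A = ((Hm t L).submatrix κ κ).submatrix σ₀ id := by
      ext i j
      simp only [hA, Matrix.submatrix_apply, hσ₀, Equiv.trans_apply, id_eq,
        Equiv.apply_symm_apply]
    rw [h1, Matrix.det_permute, Matrix.det_submatrix_equiv_self, det_Hm, mul_one]
  -- identify A.toBlocks₂₂ with the Sdet matrix of lam
  have hA22 : (A.toBlocks₂₂).det = Sdet t N lam := by
    rw [Sdet]
    congr 1
    ext i j
    have hl : lam (i.val+1) ≤ N := hlamN _ (by omega)
    have hi := i.isLt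
    have hj := j.isLt
    simp only [Matrix.toBlocks₂₂, hA, Matrix.submatrix_apply, Matrix.of_apply, hρ, hκ,
      Equiv.ofBijective_apply, hρfun, hκfun, Sum.elim_inr, Hm]
    congr 1
    simp only [hxval]
    omega
  -- identify B.toBlocks₁₁
  set G : Matrix (Fin N) (Fin N) ℂ :=
    Matrix.of (fun i j : Fin N => qZ t ((uval j : ℤ) - ((i:ℕ):ℤ))) with hG
  have hB11 : (B.toBlocks₁₁) = Matrix.of (fun i j : Fin N =>
      (-1:ℂ)^(i:ℕ) * ((-1:ℂ)^(uval j) * G i j)) := by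
    ext i j
    simp only [Matrix.toBlocks₁₁, hB, Matrix.submatrix_apply, Matrix.of_apply, hρ, hκ,
      Equiv.ofBijective_apply, hρfun, hκfun, Sum.elim_inl, Em, hG]
    by_cases hle : (i:ℕ) ≤ uval j
    · have hii : (-1:ℂ)^(i:ℕ) * (-1:ℂ)^(i:ℕ) = 1 := by
        rw [← mul_pow]; norm_num
      have h1 : (-1:ℂ)^(uval j - (i:ℕ)) * (-1)^(i:ℕ) = (-1)^(uval j) := by
        rw [← pow_add]; congr 1; omega
      calc (-1:ℂ)^(uval j - (i:ℕ)) * qZ t ((uval j : ℤ) - ((i:ℕ):ℤ))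
          = ((-1:ℂ)^(uval j - (i:ℕ)) * ((-1:ℂ)^(i:ℕ) * (-1:ℂ)^(i:ℕ)))
            * qZ t ((uval j : ℤ) - ((i:ℕ):ℤ)) := by rw [hii, mul_one]
        _ = ((-1:ℂ)^(uval j - (i:ℕ)) * (-1:ℂ)^(i:ℕ)) * (-1:ℂ)^(i:ℕ)
            * qZ t ((uval j : ℤ) - ((i:ℕ):ℤ)) := by ring
        _ = (-1:ℂ)^(i:ℕ) * ((-1:ℂ)^(uval j) * qZ t ((uval j : ℤ) - ((i:ℕ):ℤ))) := by
            rw [h1]; ring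
    · rw [qZ_neg t (by omega : (uval j : ℤ) - ((i:ℕ):ℤ) < 0)]
      ring
  have hdetB11 : (B.toBlocks₁₁).det = εR * (εC * G.det) := by
    have h5 : (Matrix.of fun i j : Fin N => (-1:ℂ)^(uval j) * G i j).det
        = (∏ j : Fin N, (-1:ℂ)^(uval j)) * G.det :=
      Matrix.det_mul_row (fun j : Fin N => (-1:ℂ)^(uval j)) G
    have h4 : (B.toBlocks₁₁).det
        = (∏ i : Fin N, (-1:ℂ)^(i:ℕ)) *
          (Matrix.of fun i j : Fin N => (-1:ℂ)^(uval j) * G i j).det := by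
      rw [hB11]
      exact Matrix.det_mul_column (fun i : Fin N => (-1:ℂ)^(i:ℕ))
        (Matrix.of fun i j : Fin N => (-1:ℂ)^(uval j) * G i j)
    rw [h4, h5]
  -- relate G to the Sdet matrix of lam'
  have hGS : Sdet t N lam' = s₂ * G.det := by
    rw [Sdet, ← Matrix.det_transpose]
    have h2 : Matrix.transpose (Matrix.of fun i j : Fin N =>
        qZ t ((lam' ((i:ℕ)+1) : ℤ) - ((i:ℕ)+1) + ((j:ℕ)+1)))
        = G.submatrix (Fin.revPerm : Equiv.Perm (Fin N)) id := by
      ext i j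
      have hi := i.isLt
      have hj := j.isLt
      simp only [Matrix.transpose_apply, Matrix.of_apply, Matrix.submatrix_apply, id_eq,
        Fin.revPerm_apply, hG]
      congr 1
      simp only [huval, Fin.val_rev]
      have h3 := hlam'N (j.val+1)
      omega
    rw [h2, Matrix.det_permute, hs₂]
  have hGdet : G.det = s₂ * Sdet t N lam' := by
    rw [hGS]
    rw [← mul_assoc, hs₂sq, one_mul]
  -- combine
  have hjac := jacobi_block A B hAB
  rw [hdetA, hdetB11, hA22, hGdet] at hjac
  rw [← hjac, hε]
  ring

theorem stmt12 (t : ℕ → ℂ) (N : ℕ) (lam : ℕ → ℕ)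
    (hmono : ∀ k, 1 ≤ k → lam (k+1) ≤ lam k)
    (hsupp : ∀ k, N < k → lam k = 0) (hlen : lam 1 ≤ N) :
    Sdet t N lam = Sdet t N (fun k => ((Finset.Icc 1 N).filter (fun i => k ≤ lam i)).card) := by
  obtain ⟨ε, hεpm, hrel⟩ := key_rel N lam hmono hlen
  have hmono' : ∀ k, 1 ≤ k →
      ((Finset.Icc 1 N).filter (fun i => (k+1) ≤ lam i)).card
        ≤ ((Finset.Icc 1 N).filter (fun i => k ≤ lam i)).card := by
    intro k _
    apply Finset.card_le_card
    intro x hx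
    rw [Finset.mem_filter] at hx ⊢
    exact ⟨hx.1, by omega⟩
  obtain ⟨r, hr, hS⟩ := Sdet_t0_pos N lam hmono
  obtain ⟨r', hr', hS'⟩ := Sdet_t0_pos N
    (fun k => ((Finset.Icc 1 N).filter (fun i => k ≤ lam i)).card) hmono'
  rcases hεpm with hone | hneg
  · rw [hrel t, hone, one_mul]
  · exfalso
    have h0 := hrel t0
    rw [hS, hS', hneg] at h0
    have : (r : ℂ) = ((-r' : ℝ) : ℂ) := by
      rw [h0]
      push_cast
      ring
    have hrr : r = -r' := Complex.ofReal_inj.1 this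
    linarith
end

section
/- Let U(t,s) = ∑_{m=0}^{2n-2} q_m(t) Λ^m + sΛ' - (-1)^n s² Λ'' be the 2n×2n matrix from the type D f-KT hierarchy, with Λ, Λ', Λ'' as defined. Let σ ∈ O_{2n} be the permutation matrix swapping indices n and n+1 (identity elsewhere). Then σ⁻¹ U(t,s) σ = U(t,-s). -/
open Finset

noncomputable def Umat (n : ℕ) (t : ℕ → ℂ) (s : ℂ) : Matrix (Fin (2*n)) (Fin (2*n)) ℂ :=
  ∑ m ∈ Finset.range (2*n-1), qn n t m • Lam n ^ m + s • Lam' n - ((-1:ℂ)^n * s^2) • Lam'' n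

noncomputable def sigmaMat (n : ℕ) : Matrix (Fin (2*n)) (Fin (2*n)) ℂ :=
  Matrix.of fun i j =>
    if ((i:ℕ)+1 = n ∧ (j:ℕ)+1 = n+1) ∨ ((i:ℕ)+1 = n+1 ∧ (j:ℕ)+1 = n) ∨
       ((i:ℕ) = (j:ℕ) ∧ (i:ℕ)+1 ≠ n ∧ (i:ℕ)+1 ≠ n+1) then (1:ℂ) else 0


/-!
Conjugation by the permutation matrix of a permutation `e` is the algebra automorphism
`φ : A ↦ A.submatrix e.symm e.symm`, so it maps `U(t, s) = ∑ q_m Λ^m + s Λ' - (-1)^n s² Λ''` to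
`∑ q_m φ(Λ)^m + s φ(Λ') - (-1)^n s² φ(Λ'')`. For the transposition `e` of the two middle indices,
`φ(Λ) = Λ` (the transposition exchanges `E_{n-1,n} ↔ E_{n-1,n+1}` and `E_{n,n+2} ↔ E_{n+1,n+2}`),
`φ(Λ'') = Λ''` (as `n ≥ 2`), and `φ(Λ') = -Λ'`, since both pieces `-E_{1,n} + E_{1,n+1}` and
`E_{n,2n} - E_{n+1,2n}` of `Λ'` change sign.
Hence `φ(U(t, s)) = U(t, -s)`.
-/

open Matrix Equiv

section PermMatrix

variable {R ι κ : Type*} [CommRing R] [Fintype ι] [DecidableEq ι] [Fintype κ] [DecidableEq κ]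

theorem Matrix.permMatrix_inv (σ : Perm ι) : (σ.permMatrix R)⁻¹ = σ⁻¹.permMatrix R :=
  inv_eq_left_inv (by rw [← permMatrix_mul, mul_inv_cancel, permMatrix_one])

theorem Matrix.permMatrix_inv_mul_mul_permMatrix (σ : Perm ι) (A : Matrix ι ι R) :
    (σ.permMatrix R)⁻¹ * A * σ.permMatrix R = reindexAlgEquiv R R σ A := by
  rw [permMatrix_inv, PEquiv.toMatrix_toPEquiv_mul, PEquiv.mul_toMatrix_toPEquiv]
  rfl

theorem Matrix.reindexAlgEquiv_single (e : ι ≃ κ) (i j : ι) (c : R) :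
    reindexAlgEquiv R R e (single i j c) = single (e i) (e j) c := by
  rw [coe_reindexAlgEquiv, reindex_apply, submatrix_single_equiv, symm_symm]

end PermMatrix

theorem map_Umat {n : ℕ} {F : Type*} [FunLike F (Matrix (Fin (2 * n)) (Fin (2 * n)) ℂ)
      (Matrix (Fin (2 * n)) (Fin (2 * n)) ℂ)] [AlgHomClass F ℂ _ _] (φ : F)
    (hLam : φ (Lam n) = Lam n) (hLam' : φ (Lam' n) = -Lam' n) (hLam'' : φ (Lam'' n) = Lam'' n)
    (t : ℕ → ℂ) (s : ℂ) : φ (Umat n t s) = Umat n t (-s) := by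
  simp only [Umat, map_sub, map_add, map_sum, map_smul, map_pow, hLam, hLam', hLam'', smul_neg,
    neg_smul, neg_sq]

section SwapMid

variable (n : ℕ) (hn : 2 ≤ n)

/-- The transposition of the `n`-th and `(n+1)`-st basis vectors (indices `n - 1` and `n` in `Fin`). -/
def swapMid : Perm (Fin (2 * n)) :=
  swap ⟨n - 1, by omega⟩ ⟨n, by omega⟩

lemma swapMid_val (i : Fin (2 * n)) :
    (swapMid n hn i : ℕ) = if (i : ℕ) = n - 1 then n else if (i : ℕ) = n then n - 1 else i := by
  simp only [swapMid, swap_apply_def, Fin.ext_iff]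
  split_ifs <;> simp_all

lemma swapMid_symm : (swapMid n hn).symm = swapMid n hn :=
  symm_swap _ _

lemma swapMid_of_ne {i : ℕ} (hi : i < 2 * n) (h₁ : i ≠ n - 1) (h₂ : i ≠ n) :
    swapMid n hn ⟨i, hi⟩ = ⟨i, hi⟩ :=
  Fin.ext <| by rw [swapMid_val, if_neg h₁, if_neg h₂]

lemma swapMid_first : swapMid n hn ⟨0, by omega⟩ = ⟨0, by omega⟩ :=
  swapMid_of_ne n hn _ (by omega) (by omega)

lemma swapMid_last : swapMid n hn ⟨2 * n - 1, by omega⟩ = ⟨2 * n - 1, by omega⟩ :=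
  swapMid_of_ne n hn _ (by omega) (by omega)

lemma sigmaMat_eq_permMatrix : sigmaMat n = (swapMid n hn).permMatrix ℂ := by
  ext i j
  simp only [sigmaMat, of_apply, PEquiv.toMatrix_apply, toPEquiv_apply, Option.mem_def,
    Option.some_inj, Fin.ext_iff, swapMid_val]
  split_ifs <;> first | rfl | omega

lemma reindexAlgEquiv_swapMid_Lam : reindexAlgEquiv ℂ ℂ (swapMid n hn) (Lam n) = Lam n := by
  ext i j
  simp only [coe_reindexAlgEquiv, reindex_apply, swapMid_symm, submatrix_apply, Lam, of_apply,
    swapMid_val]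
  split_ifs <;> first | omega | norm_num

lemma Lam'_eq_single :
    Lam' n = single ⟨0, by omega⟩ ⟨n - 1, by omega⟩ (-1) + single ⟨0, by omega⟩ ⟨n, by omega⟩ 1
      + single ⟨n - 1, by omega⟩ ⟨2 * n - 1, by omega⟩ ((-1) ^ n)
      + single ⟨n, by omega⟩ ⟨2 * n - 1, by omega⟩ (-(-1) ^ n) := by
  ext i j
  simp only [Lam', of_apply, Matrix.add_apply, single_apply, Fin.ext_iff]
  refine congrArg₂ _ (congrArg₂ _ (congrArg₂ _ ?_ ?_) ?_) ?_ <;> exact if_congr (by omega) rfl rfl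

lemma Lam''_eq_single : Lam'' n = single ⟨0, by omega⟩ ⟨2 * n - 1, by omega⟩ 1 := by
  ext i j
  simp only [Lam'', of_apply, single_apply, Fin.ext_iff]
  exact if_congr (by omega) rfl rfl

lemma reindexAlgEquiv_swapMid_Lam' : reindexAlgEquiv ℂ ℂ (swapMid n hn) (Lam' n) = -Lam' n := by
  rw [Lam'_eq_single n hn]
  simp only [map_add, reindexAlgEquiv_single, swapMid_first, swapMid_last]
  simp only [swapMid, swap_apply_left, swap_apply_right, neg_add, single_neg, neg_neg]
  abel

lemma reindexAlgEquiv_swapMid_Lam'' :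
    reindexAlgEquiv ℂ ℂ (swapMid n hn) (Lam'' n) = Lam'' n := by
  rw [Lam''_eq_single n hn, reindexAlgEquiv_single, swapMid_first, swapMid_last]

end SwapMid

theorem stmt16 (n : ℕ) (hn : 2 ≤ n) (t : ℕ → ℂ) (s : ℂ) :
    (sigmaMat n)⁻¹ * Umat n t s * sigmaMat n = Umat n t (-s) := by
  rw [sigmaMat_eq_permMatrix n hn, permMatrix_inv_mul_mul_permMatrix]
  exact map_Umat _ (reindexAlgEquiv_swapMid_Lam n hn) (reindexAlgEquiv_swapMid_Lam' n hn)
    (reindexAlgEquiv_swapMid_Lam'' n hn) t s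
end
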